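/- arXiv:2604.12087 — 5 statements merged into one kernel-verified Lean document; each statement's English description precedes it below -/
import Mathlib

section
/- Let Θ ⊆ ℝ be bounded with M := sup_{θ∈Θ} |θ - θ₀| for a fixed θ₀ ∈ Θ. Let g₀ be a probability measure on Θ supported on at most J points, and let g be any probability measure on Θ. Define m_{k,ν} := ∫ (θ-θ₀)^k dν(θ). Then for every integer k > 2J, |m_{k,g} - m_{k,g₀}| ≤ k·(M+1)^{2Jk} · max_{1≤j≤2J} |m_{j,g} - m_{j,g₀}|. -/
/-!
Write `Δⱼ = m_{j,g} - m_{j,g₀}`. The polynomial `p = ∏ₛ (X - (s - θ₀))²` over the atoms `s`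
of `g₀` is monic of degree `d ≤ 2J`, nonnegative, vanishes `g₀`-a.e. at `θ - θ₀`, and its
coefficients have absolute sum at most `(M + 1)^(2J)`. Integrating `(θ - θ₀)ᵉ p(θ - θ₀)` against
`g - g₀` expresses `Δ_{e+d}` through `Δₑ, …, Δ_{e+d-1}` and `∫ (θ - θ₀)ᵉ p(θ - θ₀) dg`; as
`p ≥ 0`, the latter is at most `Mᵉ ∫ p(θ - θ₀) dg = Mᵉ ∑ pᵢ Δᵢ`, which only involves the first
`2J` moments. Strong induction on `k` then gives the bound.
-/

open MeasureTheory Polynomial Finset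

namespace Polynomial

def AbsCoeffLE (p q : ℝ[X]) : Prop := ∀ i, |p.coeff i| ≤ q.coeff i

namespace AbsCoeffLE

theorem mul {p₁ p₂ q₁ q₂ : ℝ[X]} (h₁ : AbsCoeffLE p₁ q₁) (h₂ : AbsCoeffLE p₂ q₂) :
    AbsCoeffLE (p₁ * p₂) (q₁ * q₂) := fun n => by
  rw [coeff_mul, coeff_mul]
  refine (abs_sum_le_sum_abs _ _).trans (sum_le_sum fun x _ => ?_)
  rw [abs_mul]
  exact mul_le_mul (h₁ _) (h₂ _) (abs_nonneg _) ((abs_nonneg _).trans (h₁ _))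

theorem one : AbsCoeffLE 1 1 := fun i => by
  rw [coeff_one]
  split_ifs <;> simp

theorem prod {ι : Type*} {s : Finset ι} {p q : ι → ℝ[X]}
    (h : ∀ i ∈ s, AbsCoeffLE (p i) (q i)) : AbsCoeffLE (∏ i ∈ s, p i) (∏ i ∈ s, q i) := by
  classical
  induction s using Finset.induction with
  | empty => simpa using one
  | insert a s ha ih =>
    rw [prod_insert ha, prod_insert ha]
    exact (h a (mem_insert_self a s)).mul (ih fun i hi => h i (mem_insert_of_mem hi))

theorem X_sub_C (a : ℝ) : AbsCoeffLE (X - C a) (X + C |a|)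
  | 0 => by simp
  | 1 => by simp
  | n + 2 => by simp [coeff_X]

theorem sum_range_abs_coeff_le_eval_one {p q : ℝ[X]} (h : AbsCoeffLE p q) (n : ℕ) :
    ∑ i ∈ range n, |p.coeff i| ≤ q.eval 1 := by
  have hq : ∀ i, 0 ≤ q.coeff i := fun i => (abs_nonneg _).trans (h i)
  calc ∑ i ∈ range n, |p.coeff i|
      ≤ ∑ i ∈ range (n + q.natDegree + 1), q.coeff i :=
        sum_le_sum_of_subset_of_nonneg (range_subset_range.2 (by omega)) (fun i _ _ => hq i)
          |>.trans' (sum_le_sum fun i _ => h i)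
    _ = q.eval 1 := by rw [eval_eq_sum_range' (n := n + q.natDegree + 1) (by omega)]; simp

end AbsCoeffLE

theorem sum_range_abs_coeff_prod_X_sub_C_sq_le {ι : Type*} (s : Finset ι) {a : ι → ℝ} {M : ℝ}
    (ha : ∀ i ∈ s, |a i| ≤ M) (n : ℕ) :
    ∑ j ∈ range n, |((∏ i ∈ s, (X - C (a i))) ^ 2).coeff j| ≤ (M + 1) ^ (2 * #s) := by
  have hq := AbsCoeffLE.prod fun i (_ : i ∈ s) => AbsCoeffLE.X_sub_C (a i)
  refine ((sq (∏ i ∈ s, (X - C (a i)))).symm ▸ hq.mul hq).sum_range_abs_coeff_le_eval_one n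
    |>.trans ?_
  simp only [← sq, eval_pow, eval_prod, eval_add, eval_X, eval_C, pow_mul', ← prod_const]
  exact pow_le_pow_left₀ (by positivity)
    (prod_le_prod (fun _ _ => by positivity) fun i hi => by linarith [ha i hi]) 2

theorem pow_mul_eval_eq_sum {R : Type*} [CommSemiring R] (p : R[X]) (e : ℕ) (x : R) :
    x ^ e * p.eval x = ∑ i ∈ range (p.natDegree + 1), p.coeff i * x ^ (e + i) := by
  rw [eval_eq_sum_range, mul_sum]
  exact sum_congr rfl fun i _ => by ring

end Polynomial

section Moments

variable {ν ν₀ : Measure ℝ} {c M : ℝ}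

noncomputable def momentDiff (c : ℝ) (ν ν₀ : Measure ℝ) (j : ℕ) : ℝ :=
  ∫ θ, (θ - c) ^ j ∂ν - ∫ θ, (θ - c) ^ j ∂ν₀

theorem momentDiff_zero [IsProbabilityMeasure ν] [IsProbabilityMeasure ν₀] :
    momentDiff c ν ν₀ 0 = 0 := by
  simp [momentDiff]

theorem integrable_pow_sub [IsFiniteMeasure ν] (hν : ∀ᵐ θ ∂ν, |θ - c| ≤ M) (k : ℕ) :
    Integrable (fun θ => (θ - c) ^ k) ν :=
  .of_bound (by fun_prop) (M ^ k) <| hν.mono fun θ hθ => by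
    rw [Real.norm_eq_abs, abs_pow]
    exact pow_le_pow_left₀ (abs_nonneg _) hθ k

theorem integrable_pow_mul_eval_sub [IsFiniteMeasure ν] (hν : ∀ᵐ θ ∂ν, |θ - c| ≤ M)
    (p : ℝ[X]) (e : ℕ) : Integrable (fun θ => (θ - c) ^ e * p.eval (θ - c)) ν := by
  simp_rw [pow_mul_eval_eq_sum]
  exact integrable_finsetSum _ fun i _ => (integrable_pow_sub hν _).const_mul _

theorem integral_pow_mul_eval_sub [IsFiniteMeasure ν] (hν : ∀ᵐ θ ∂ν, |θ - c| ≤ M)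
    (p : ℝ[X]) (e : ℕ) :
    ∫ θ, (θ - c) ^ e * p.eval (θ - c) ∂ν =
      ∑ i ∈ range (p.natDegree + 1), p.coeff i * ∫ θ, (θ - c) ^ (e + i) ∂ν := by
  simp_rw [pow_mul_eval_eq_sum]
  rw [integral_finsetSum _ fun i _ => (integrable_pow_sub hν _).const_mul _]
  simp_rw [integral_const_mul]

theorem sum_coeff_mul_momentDiff [IsFiniteMeasure ν] [IsFiniteMeasure ν₀]
    (hν : ∀ᵐ θ ∂ν, |θ - c| ≤ M) (hν₀ : ∀ᵐ θ ∂ν₀, |θ - c| ≤ M) {p : ℝ[X]}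
    (hp : ∀ᵐ θ ∂ν₀, p.eval (θ - c) = 0) (e : ℕ) :
    ∑ i ∈ range (p.natDegree + 1), p.coeff i * momentDiff c ν ν₀ (e + i) =
      ∫ θ, (θ - c) ^ e * p.eval (θ - c) ∂ν := by
  have h₀ : ∫ θ, (θ - c) ^ e * p.eval (θ - c) ∂ν₀ = 0 :=
    integral_eq_zero_of_ae (hp.mono fun θ hθ => by simp [hθ])
  rw [integral_pow_mul_eval_sub hν₀] at h₀
  simp only [momentDiff, mul_sub, sum_sub_distrib, h₀, sub_zero, integral_pow_mul_eval_sub hν]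

theorem abs_integral_pow_mul_eval_sub_le [IsFiniteMeasure ν] (hν : ∀ᵐ θ ∂ν, |θ - c| ≤ M)
    {p : ℝ[X]} (hp : ∀ x, 0 ≤ p.eval x) (e : ℕ) :
    |∫ θ, (θ - c) ^ e * p.eval (θ - c) ∂ν| ≤ M ^ e * ∫ θ, p.eval (θ - c) ∂ν := by
  rw [← integral_const_mul]
  refine abs_integral_le_integral_abs.trans <| integral_mono_of_nonneg
    (.of_forall fun _ => abs_nonneg _) ?_ (hν.mono fun θ hθ => ?_)
  · simpa using (integrable_pow_mul_eval_sub hν p 0).const_mul (M ^ e)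
  · simp only [abs_mul, abs_pow, abs_of_nonneg (hp _)]
    exact mul_le_mul_of_nonneg_right (pow_le_pow_left₀ (abs_nonneg _) hθ e) (hp _)

theorem abs_momentDiff_le [IsProbabilityMeasure ν] [IsProbabilityMeasure ν₀] (hM : 0 ≤ M)
    (hν : ∀ᵐ θ ∂ν, |θ - c| ≤ M) (hν₀ : ∀ᵐ θ ∂ν₀, |θ - c| ≤ M) {p : ℝ[X]} (hmonic : p.Monic)
    (hp₀ : ∀ x, 0 ≤ p.eval x) (hp : ∀ᵐ θ ∂ν₀, p.eval (θ - c) = 0) {A T b : ℝ}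
    (hA : ∑ i ∈ range (p.natDegree + 1), |p.coeff i| ≤ A)
    (hT : ∀ i ≤ p.natDegree, |momentDiff c ν ν₀ i| ≤ T) (e : ℕ) (hb₀ : 0 ≤ b)
    (hb : ∀ i < p.natDegree, |momentDiff c ν ν₀ (e + i)| ≤ b) :
    |momentDiff c ν ν₀ (e + p.natDegree)| ≤ M ^ e * (A * T) + A * b := by
  have hT₀ : 0 ≤ T := (abs_nonneg _).trans (hT 0 p.natDegree.zero_le)
  have hmass : ∫ θ, p.eval (θ - c) ∂ν ≤ A * T := by
    have h := sum_coeff_mul_momentDiff hν hν₀ hp 0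
    simp only [pow_zero, one_mul, zero_add] at h
    calc ∫ θ, p.eval (θ - c) ∂ν
        ≤ ∑ i ∈ range (p.natDegree + 1), |p.coeff i| * T := h ▸ sum_le_sum fun i hi => by
          refine (le_abs_self _).trans ?_
          rw [abs_mul]
          gcongr
          exact hT i (Nat.lt_succ_iff.1 (mem_range.1 hi))
      _ ≤ A * T := by rw [← sum_mul]; gcongr
  have hrec := sum_coeff_mul_momentDiff hν hν₀ hp e
  rw [sum_range_succ, hmonic.coeff_natDegree, one_mul] at hrec
  rw [eq_sub_of_add_eq' hrec]
  grw [abs_sub, abs_integral_pow_mul_eval_sub_le hν hp₀, hmass, abs_sum_le_sum_abs]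
  gcongr
  calc ∑ i ∈ range p.natDegree, |p.coeff i * momentDiff c ν ν₀ (e + i)|
      ≤ ∑ i ∈ range p.natDegree, |p.coeff i| * b := sum_le_sum fun i hi => by
        rw [abs_mul]; gcongr; exact hb i (mem_range.1 hi)
    _ ≤ ∑ i ∈ range (p.natDegree + 1), |p.coeff i| * b :=
        sum_le_sum_of_subset_of_nonneg (range_subset_range.2 p.natDegree.le_succ)
          fun _ _ _ => by positivity
    _ ≤ A * b := by rw [← sum_mul]; gcongr

end Moments

theorem abs_le_mul_pow_mul_of_le_add {δ : ℕ → ℝ} {L : ℕ} {K T : ℝ} (hK : 1 ≤ K) (hT : 0 ≤ T)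
    (hlow : ∀ n, 1 ≤ n → n ≤ L → |δ n| ≤ T)
    (hstep : ∀ n, L < n → ∀ b, 0 ≤ b → (∀ j, 1 ≤ j → j < n → |δ j| ≤ b) →
      |δ n| ≤ K ^ n * T + K * b)
    (n : ℕ) (hn : 1 ≤ n) : |δ n| ≤ n * K ^ n * T := by
  induction n using Nat.strong_induction_on with
  | _ n ih =>
    have hK₀ : 0 ≤ K := zero_le_one.trans hK
    rcases le_or_gt n L with hnL | hLn
    · calc |δ n| ≤ 1 * 1 * T := by simpa using hlow n hn hnL
        _ ≤ n * K ^ n * T := by gcongr; exact_mod_cast hn; exact one_le_pow₀ hK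
    · obtain ⟨m, rfl⟩ : ∃ m, n = m + 1 := ⟨n - 1, by omega⟩
      have hb : ∀ j, 1 ≤ j → j < m + 1 → |δ j| ≤ m * K ^ m * T := fun j hj hjm =>
        have hjm' : j ≤ m := Nat.lt_succ_iff.1 hjm
        (ih j hjm hj).trans <| by gcongr
      refine (hstep (m + 1) hLn _ (by positivity) hb).trans_eq ?_
      push_cast
      ring

theorem exists_monic_sq_vanishing_ae {ν₀ : Measure ℝ} {S : Finset ℝ} {c M : ℝ} {J : ℕ}
    (hM : 0 ≤ M) (hSJ : #S ≤ J) (hS : ∀ᵐ θ ∂ν₀, θ ∈ S) (hν₀ : ∀ᵐ θ ∂ν₀, |θ - c| ≤ M) :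
    ∃ p : ℝ[X], p.Monic ∧ p.natDegree ≤ 2 * J ∧ (∀ x, 0 ≤ p.eval x) ∧
      (∀ᵐ θ ∂ν₀, p.eval (θ - c) = 0) ∧
      ∑ i ∈ range (p.natDegree + 1), |p.coeff i| ≤ (M + 1) ^ (2 * J) := by
  classical
  set s := S.filter fun a => |a - c| ≤ M
  have hsJ : #s ≤ J := (card_filter_le _ _).trans hSJ
  refine ⟨(∏ a ∈ s, (X - C (a - c))) ^ 2, (monic_prod_X_sub_C _ _).pow 2, ?_,
    fun x => by rw [eval_pow]; positivity, ?_, ?_⟩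
  · rw [natDegree_pow, natDegree_finsetProd_X_sub_C_eq_card]
    omega
  · filter_upwards [hS, hν₀] with θ hθS hθM
    rw [eval_pow, eval_prod, prod_eq_zero (mem_filter.2 ⟨hθS, hθM⟩) (by simp),
      zero_pow two_ne_zero]
  · refine (sum_range_abs_coeff_prod_X_sub_C_sq_le s (fun a ha => (mem_filter.1 ha).2) _).trans ?_
    exact pow_le_pow_right₀ (by linarith) (by omega)

theorem moment_comparison_general
    (Θ : Set ℝ) (θ₀ M : ℝ) (hθ₀ : θ₀ ∈ Θ)
    (hM : IsLUB ((fun θ => |θ - θ₀|) '' Θ) M)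
    (J : ℕ)
    (g g₀ : Measure ℝ) [IsProbabilityMeasure g] [IsProbabilityMeasure g₀]
    (hgΘ : g Θᶜ = 0) (hg₀Θ : g₀ Θᶜ = 0)
    (S : Finset ℝ) (hScard : S.card ≤ J) (hS : g₀ (↑S : Set ℝ)ᶜ = 0)
    (m : ℕ → Measure ℝ → ℝ)
    (hm : ∀ k ν, m k ν = ∫ θ, (θ - θ₀) ^ k ∂ν)
    (k : ℕ) (hk : 2 * J < k)
    (hne : (Finset.Icc 1 (2 * J)).Nonempty) :
    |m k g - m k g₀| ≤
      (k : ℝ) * (M + 1) ^ (2 * J * k) *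
        (Finset.Icc 1 (2 * J)).sup' hne (fun j => |m j g - m j g₀|) := by
  have hΘ : ∀ θ ∈ Θ, |θ - θ₀| ≤ M := fun θ hθ => hM.1 ⟨θ, hθ, rfl⟩
  have hM₀ : 0 ≤ M := by simpa using hΘ θ₀ hθ₀
  have hg : ∀ᵐ θ ∂g, |θ - θ₀| ≤ M := (ae_iff.2 hgΘ).mono hΘ
  have hg₀ : ∀ᵐ θ ∂g₀, |θ - θ₀| ≤ M := (ae_iff.2 hg₀Θ).mono hΘ
  have hdiff : ∀ j, m j g - m j g₀ = momentDiff θ₀ g g₀ j := fun j => by simp [hm, momentDiff]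
  simp only [hdiff]
  rw [pow_mul]
  set T := (Icc 1 (2 * J)).sup' hne fun j => |momentDiff θ₀ g g₀ j|
  have hlow : ∀ j, 1 ≤ j → j ≤ 2 * J → |momentDiff θ₀ g g₀ j| ≤ T := fun j h₁ h₂ =>
    le_sup' (fun j => |momentDiff θ₀ g g₀ j|) (mem_Icc.2 ⟨h₁, h₂⟩)
  have hJ : 1 ≤ J := by have := nonempty_Icc.1 hne; omega
  obtain ⟨p, hmonic, hdeg, hp₀, hvanish, hcoeff⟩ :=
    exists_monic_sq_vanishing_ae hM₀ hScard (ae_iff.2 hS) hg₀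
  have hT₀ : 0 ≤ T := (abs_nonneg _).trans (hlow 1 le_rfl (by omega))
  refine abs_le_mul_pow_mul_of_le_add (one_le_pow₀ (by linarith)) hT₀ hlow
    (fun n hn b hb₀ hb => ?_) k (by omega)
  obtain ⟨e, rfl⟩ : ∃ e, n = e + p.natDegree := ⟨n - p.natDegree, by omega⟩
  refine (abs_momentDiff_le (T := T) hM₀ hg hg₀ hmonic hp₀ hvanish hcoeff (fun i hi => ?_) e
    hb₀ fun i hi => hb _ (by omega) (by omega)).trans (add_le_add ?_ le_rfl)
  · rcases i.eq_zero_or_pos with rfl | hi₀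
    · simpa [momentDiff_zero] using hT₀
    · exact hlow i hi₀ (by omega)
  · calc M ^ e * ((M + 1) ^ (2 * J) * T) ≤ (M + 1) ^ (e + 2 * J) * T := by
          rw [pow_add, ← mul_assoc]
          gcongr
          linarith
      _ ≤ ((M + 1) ^ (2 * J)) ^ (e + p.natDegree) * T := by
          rw [← pow_mul]
          gcongr
          · linarith
          · nlinarith

theorem moment_comparison
    (Θ : Set ℝ) (θ₀ M : ℝ) (hθ₀ : θ₀ ∈ Θ)
    (hM : IsLUB ((fun θ => |θ - θ₀|) '' Θ) M)
    (J : ℕ) (hJ : 1 ≤ J)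
    (g g₀ : Measure ℝ) [IsProbabilityMeasure g] [IsProbabilityMeasure g₀]
    (hgΘ : g Θᶜ = 0) (hg₀Θ : g₀ Θᶜ = 0)
    (S : Finset ℝ) (hScard : S.card ≤ J) (hS : g₀ (↑S : Set ℝ)ᶜ = 0)
    (m : ℕ → Measure ℝ → ℝ)
    (hm : ∀ k ν, m k ν = ∫ θ, (θ - θ₀) ^ k ∂ν)
    (k : ℕ) (hk : 2 * J < k)
    (hne : (Finset.Icc 1 (2 * J)).Nonempty) :
    |m k g - m k g₀| ≤
      (k : ℝ) * (M + 1) ^ (2 * J * k) *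
        (Finset.Icc 1 (2 * J)).sup' hne (fun j => |m j g - m j g₀|) :=
  moment_comparison_general Θ θ₀ M hθ₀ hM J g g₀ hgΘ hg₀Θ S hScard hS m hm k hk hne
end

section
/- Let Θ ⊆ ℝ be bounded with M := sup_{θ∈Θ}|θ-θ₀|, g₀ a probability measure on Θ with at most J support points, g any probability measure on Θ, and Δ := max_{1≤j≤2J}|m_{j,g} - m_{j,g₀}| where m_{k,ν} := ∫(θ-θ₀)^k dν(θ). Then for every integer k > 2J, |m_{k,g} - m_{k,g₀}| ≤ (k-2J)·(M+1)^{2J(k-2J)+1}·Δ. -/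
/-!
Let `p` be the square of a monic polynomial of degree `J` whose roots are the points `s - θ₀` of
the support of `g₀` (padded with roots at `0`). Then `p ≥ 0`, `p` has degree `2J`, its
coefficients have absolute sum at most `(M + 1) ^ (2J)`, and `p(θ - θ₀) = 0` `g₀`-a.e. Hence
`∑ᵢ pᵢ (m_{t+i,g} - m_{t+i,g₀}) = ∫ p(θ - θ₀) (θ - θ₀)ᵗ dg`, which is at most `M ^ t` times its
value at `t = 0`, itself at most `(M + 1) ^ (2J) Δ`. Since `p` is monic this expresses the moment
difference of order `2J + t` through the `2J` preceding ones, and induction on `t` gives the bound.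
-/

open Polynomial Finset MeasureTheory

namespace Polynomial

theorem sum_range_abs_coeff_X_sub_C_mul_le (a : ℝ) {q : ℝ[X]} {n : ℕ} (hq : q.natDegree < n) :
    ∑ i ∈ range (n + 1), |((X - C a) * q).coeff i| ≤ (|a| + 1) * ∑ i ∈ range n, |q.coeff i| := by
  have hXq : ∑ i ∈ range (n + 1), |(X * q).coeff i| = ∑ i ∈ range n, |q.coeff i| := by
    simp [Finset.sum_range_succ', coeff_X_mul]
  have hq' : ∑ i ∈ range (n + 1), |q.coeff i| = ∑ i ∈ range n, |q.coeff i| := by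
    simp [Finset.sum_range_succ, coeff_eq_zero_of_natDegree_lt hq]
  calc ∑ i ∈ range (n + 1), |((X - C a) * q).coeff i|
      ≤ ∑ i ∈ range (n + 1), (|(X * q).coeff i| + |a| * |q.coeff i|) := by
        gcongr with i
        rw [sub_mul, coeff_sub, coeff_C_mul, ← abs_mul]
        exact abs_sub _ _
    _ = (|a| + 1) * ∑ i ∈ range n, |q.coeff i| := by
        rw [Finset.sum_add_distrib, ← Finset.mul_sum, hXq, hq']
        ring

theorem sum_range_abs_coeff_multiset_prod_X_sub_C_le {T : Multiset ℝ} {M : ℝ}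
    (hT : ∀ a ∈ T, |a| ≤ M) :
    ∑ i ∈ range (Multiset.card T + 1), |(T.map fun a => X - C a).prod.coeff i| ≤
      (M + 1) ^ Multiset.card T := by
  induction T using Multiset.induction_on with
  | empty => simp
  | cons a T ih =>
    have hTM := ih fun b hb => hT b (Multiset.mem_cons_of_mem hb)
    have haM := hT a (Multiset.mem_cons_self a T)
    rw [Multiset.map_cons, Multiset.prod_cons, Multiset.card_cons, pow_succ']
    calc _ ≤ (|a| + 1) * ∑ i ∈ range (Multiset.card T + 1),
              |(T.map fun a => X - C a).prod.coeff i| :=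
          sum_range_abs_coeff_X_sub_C_mul_le a (by
            rw [natDegree_multiset_prod_X_sub_C_eq_card]; exact Nat.lt_succ_self _)
      _ ≤ (M + 1) * (M + 1) ^ Multiset.card T := by gcongr; linarith [abs_nonneg a]

/-- The witness is the square of `X ^ (J - #S) * ∏ s ∈ S, (X - s)`. -/
theorem exists_monic_nonneg_eval_eq_zero {S : Finset ℝ} {J : ℕ} (hSJ : S.card ≤ J) {M : ℝ}
    (hM : 0 ≤ M) (hSM : ∀ s ∈ S, |s| ≤ M) :
    ∃ p : ℝ[X], p.Monic ∧ p.natDegree = 2 * J ∧ (∀ x, 0 ≤ p.eval x) ∧ (∀ s ∈ S, p.eval s = 0) ∧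
      ∑ i ∈ range (2 * J + 1), |p.coeff i| ≤ (M + 1) ^ (2 * J) := by
  set U : Multiset ℝ := Multiset.replicate (J - S.card) 0 + S.val
  have hU : Multiset.card (U + U) = 2 * J := by
    simp only [Multiset.card_add, Multiset.card_replicate, card_val, U]; omega
  set q : ℝ[X] := (U.map fun a => X - C a).prod
  have hpq : ((U + U).map fun a => X - C a).prod = q * q := by
    rw [Multiset.map_add, Multiset.prod_add]
  refine ⟨q * q, ?_, ?_, fun x => ?_, fun s hs => ?_, ?_⟩
  · rw [← hpq]; exact monic_multiset_prod_of_monic _ _ fun a _ => monic_X_sub_C a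
  · rw [← hpq, natDegree_multiset_prod_X_sub_C_eq_card, hU]
  · rw [eval_mul]; exact mul_self_nonneg _
  · have hq : q.eval s = 0 := by
      rw [eval_multiset_prod]
      exact Multiset.prod_eq_zero
        (Multiset.mem_map.2 ⟨_, Multiset.mem_map.2 ⟨s, by simp [U, hs], rfl⟩, by simp⟩)
    rw [eval_mul, hq, zero_mul]
  · rw [← hpq, ← hU]
    refine sum_range_abs_coeff_multiset_prod_X_sub_C_le fun a ha => ?_
    rcases Multiset.mem_add.1 ha with ha | ha <;> rcases Multiset.mem_add.1 ha with ha | ha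
    all_goals first
      | rw [Multiset.eq_of_mem_replicate ha, abs_zero]; exact hM
      | exact hSM a ha

end Polynomial

section Moments

variable {α : Type*} [MeasurableSpace α] {ν : Measure α} {f : α → ℝ}

theorem integrable_pow_of_ae_abs_le [IsFiniteMeasure ν] (hf : AEStronglyMeasurable f ν) {M : ℝ}
    (hfM : ∀ᵐ x ∂ν, |f x| ≤ M) (n : ℕ) : Integrable (fun x => f x ^ n) ν :=
  .of_bound (hf.pow n) (M ^ n) <| by
    filter_upwards [hfM] with x hx
    rw [Real.norm_eq_abs, abs_pow]
    exact pow_le_pow_left₀ (abs_nonneg _) hx n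

theorem eval_mul_pow_eq_sum (p : ℝ[X]) (y : ℝ) (t : ℕ) :
    p.eval y * y ^ t = ∑ i ∈ range (p.natDegree + 1), p.coeff i * y ^ (t + i) := by
  rw [eval_eq_sum_range, Finset.sum_mul]
  exact Finset.sum_congr rfl fun i _ => by ring

theorem integrable_eval_mul_pow (hf : ∀ n, Integrable (fun x => f x ^ n) ν) (p : ℝ[X]) (t : ℕ) :
    Integrable (fun x => p.eval (f x) * f x ^ t) ν := by
  simp_rw [eval_mul_pow_eq_sum]
  exact integrable_finsetSum _ fun i _ => (hf (t + i)).const_mul _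

theorem integral_eval_mul_pow (hf : ∀ n, Integrable (fun x => f x ^ n) ν) (p : ℝ[X]) (t : ℕ) :
    ∫ x, p.eval (f x) * f x ^ t ∂ν =
      ∑ i ∈ range (p.natDegree + 1), p.coeff i * ∫ x, f x ^ (t + i) ∂ν := by
  simp_rw [eval_mul_pow_eq_sum]
  rw [integral_finsetSum _ fun i _ => (hf (t + i)).const_mul _]
  simp_rw [integral_const_mul]

theorem abs_integral_eval_mul_pow_le (hf : ∀ n, Integrable (fun x => f x ^ n) ν) {M : ℝ}
    (hfM : ∀ᵐ x ∂ν, |f x| ≤ M) {p : ℝ[X]} (hp : ∀ y, 0 ≤ p.eval y) (t : ℕ) :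
    |∫ x, p.eval (f x) * f x ^ t ∂ν| ≤ M ^ t * ∫ x, p.eval (f x) ∂ν := by
  have hp₁ : Integrable (fun x => p.eval (f x)) ν := by
    simpa using integrable_eval_mul_pow hf p 0
  rw [← integral_const_mul]
  refine (abs_integral_le_integral_abs).trans <|
    integral_mono_ae (integrable_eval_mul_pow hf p t).abs (hp₁.const_mul _) ?_
  filter_upwards [hfM] with x hx
  rw [abs_mul, abs_of_nonneg (hp _), abs_pow, mul_comm]
  exact mul_le_mul_of_nonneg_right (pow_le_pow_left₀ (abs_nonneg _) hx t) (hp _)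

/-- Both sides are `∫ p(f) f ^ t ∂g` (resp. `M ^ t` times its value at `t = 0`), since
`p(f) = 0` `g₀`-a.e. -/
theorem abs_sum_coeff_mul_moment_sub_le {g g₀ : Measure α} [IsFiniteMeasure g]
    [IsFiniteMeasure g₀] (hf : Measurable f) {M : ℝ} (hfg : ∀ᵐ x ∂g, |f x| ≤ M)
    (hfg₀ : ∀ᵐ x ∂g₀, |f x| ≤ M) {p : ℝ[X]} (hp : ∀ y, 0 ≤ p.eval y)
    (hp₀ : ∀ᵐ x ∂g₀, p.eval (f x) = 0) (t : ℕ) :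
    |∑ i ∈ range (p.natDegree + 1),
        p.coeff i * (∫ x, f x ^ (t + i) ∂g - ∫ x, f x ^ (t + i) ∂g₀)| ≤
      M ^ t * ∑ i ∈ range (p.natDegree + 1),
        p.coeff i * (∫ x, f x ^ i ∂g - ∫ x, f x ^ i ∂g₀) := by
  have hint := integrable_pow_of_ae_abs_le hf.aestronglyMeasurable hfg
  have hint₀ := integrable_pow_of_ae_abs_le hf.aestronglyMeasurable hfg₀
  have hpair : ∀ s, ∑ i ∈ range (p.natDegree + 1),
      p.coeff i * (∫ x, f x ^ (s + i) ∂g - ∫ x, f x ^ (s + i) ∂g₀) =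
        ∫ x, p.eval (f x) * f x ^ s ∂g := by
    intro s
    have hvanish : ∫ x, p.eval (f x) * f x ^ s ∂g₀ = 0 :=
      integral_eq_zero_of_ae <| by filter_upwards [hp₀] with x hx; simp [hx]
    simp_rw [mul_sub, Finset.sum_sub_distrib, ← integral_eval_mul_pow hint,
      ← integral_eval_mul_pow hint₀, hvanish, sub_zero]
  have hpair₀ := hpair 0
  simp only [zero_add, pow_zero, mul_one] at hpair₀
  rw [hpair, hpair₀]
  exact abs_integral_eval_mul_pow_le hint hfg hp t

end Moments

theorem abs_sum_mul_le_sum_abs_mul {ι : Type*} (s : Finset ι) (a b : ι → ℝ) {C : ℝ}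
    (hb : ∀ i ∈ s, |b i| ≤ C) : |∑ i ∈ s, a i * b i| ≤ (∑ i ∈ s, |a i|) * C := by
  rw [Finset.sum_mul]
  refine (abs_sum_le_sum_abs _ _).trans (Finset.sum_le_sum fun i hi => ?_)
  rw [abs_mul]
  exact mul_le_mul_of_nonneg_left (hb i hi) (abs_nonneg _)

section Recurrence

variable {d : ℕ} {a e : ℕ → ℝ}

theorem abs_le_of_monic_recurrence_step (ha : a d = 1) {A B C : ℝ}
    (hA : ∑ i ∈ range d, |a i| ≤ A) (hC : 0 ≤ C) {t : ℕ}
    (hI : |∑ i ∈ range (d + 1), a i * e (t + i)| ≤ B) (he : ∀ j < t + d, |e j| ≤ C) :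
    |e (t + d)| ≤ B + A * C := by
  have hsplit :
      e (t + d) = ∑ i ∈ range (d + 1), a i * e (t + i) - ∑ i ∈ range d, a i * e (t + i) := by
    rw [Finset.sum_range_succ, ha, one_mul, add_sub_cancel_left]
  have hlower : |∑ i ∈ range d, a i * e (t + i)| ≤ A * C :=
    (abs_sum_mul_le_sum_abs_mul _ _ _ fun i hi => he _ (by have := mem_range.1 hi; omega)).trans
      (mul_le_mul_of_nonneg_right hA hC)
  rw [hsplit]
  exact (abs_sub _ _).trans (add_le_add hI hlower)

theorem abs_le_of_monic_recurrence (hd : 1 ≤ d) (ha : a d = 1) {M Δ : ℝ} (hM : 0 ≤ M)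
    (hl1 : ∑ i ∈ range (d + 1), |a i| ≤ (M + 1) ^ d) (he : ∀ j ≤ d, |e j| ≤ Δ)
    (hrec : ∀ t, |∑ i ∈ range (d + 1), a i * e (t + i)| ≤ M ^ t * ∑ i ∈ range (d + 1), a i * e i)
    {n : ℕ} (hn : 1 ≤ n) : ∀ j ≤ d + n, |e j| ≤ n * (M + 1) ^ (d * n + 1) * Δ := by
  set L := M + 1
  have hL1 : 1 ≤ L := by linarith
  have hΔ : 0 ≤ Δ := (abs_nonneg _).trans (he 0 (Nat.zero_le _))
  have hA : ∑ i ∈ range d, |a i| ≤ L ^ d - 1 := by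
    rw [Finset.sum_range_succ, ha, abs_one] at hl1
    linarith
  have hI : ∀ t, |∑ i ∈ range (d + 1), a i * e (t + i)| ≤ M ^ t * (L ^ d * Δ) := fun t =>
    (hrec t).trans <| mul_le_mul_of_nonneg_left ((le_abs_self _).trans <|
      (abs_sum_mul_le_sum_abs_mul _ _ _ fun i hi => he i (Nat.lt_succ_iff.1 (mem_range.1 hi))).trans
        (mul_le_mul_of_nonneg_right hl1 hΔ)) (pow_nonneg hM t)
  induction n, hn using Nat.le_induction with
  | base =>
    intro j hj
    rcases Nat.lt_or_ge d j with hdj | hjd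
    · obtain rfl : j = 1 + d := by omega
      refine (abs_le_of_monic_recurrence_step ha hA hΔ (hI 1)
        fun j hj => he j (by omega)).trans ?_
      have : L ^ (d * 1 + 1) = L ^ d * L := by rw [mul_one, pow_succ]
      rw [this, Nat.cast_one, one_mul, pow_one]
      nlinarith [pow_nonneg (zero_le_one.trans hL1) d]
    · refine (he j hjd).trans (le_mul_of_one_le_left hΔ ?_)
      rw [Nat.cast_one, one_mul]
      exact one_le_pow₀ hL1
  | succ n hn ih =>
    intro j hj
    have hpow : L ^ (d * (n + 1) + 1) = L ^ d * L ^ (d * n + 1) := by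
      rw [← pow_add]; ring_nf
    have hq : 1 ≤ L ^ d := one_le_pow₀ hL1
    have hP : 0 ≤ L ^ (d * n + 1) := by positivity
    have hnP : 0 ≤ (n : ℝ) * L ^ (d * n + 1) := by positivity
    rcases Nat.lt_or_ge (d + n) j with hdj | hjd
    · obtain rfl : j = (n + 1) + d := by omega
      refine (abs_le_of_monic_recurrence_step ha hA (by positivity) (hI (n + 1))
        fun j hj => ih j (by omega)).trans ?_
      have hMP : M ^ (n + 1) ≤ L ^ (d * n + 1) :=
        (pow_le_pow_left₀ hM (by linarith) _).trans (pow_le_pow_right₀ hL1 (by nlinarith))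
      rw [hpow]
      push_cast
      linear_combination mul_le_mul_of_nonneg_right hMP (by positivity : 0 ≤ L ^ d * Δ) +
        mul_nonneg hnP hΔ
    · refine (ih j hjd).trans (mul_le_mul_of_nonneg_right ?_ hΔ)
      rw [hpow]
      push_cast
      linear_combination mul_nonneg (sub_nonneg.2 hq) hnP + mul_nonneg (zero_le_one.trans hq) hP

end Recurrence

theorem moment_comparison_sharp
    (Θ : Set ℝ) (θ₀ M : ℝ) (hθ₀ : θ₀ ∈ Θ)
    (hM : IsLUB ((fun θ => |θ - θ₀|) '' Θ) M)
    (J : ℕ) (hJ : 1 ≤ J)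
    (g g₀ : Measure ℝ) [IsProbabilityMeasure g] [IsProbabilityMeasure g₀]
    (hgΘ : g Θᶜ = 0) (hg₀Θ : g₀ Θᶜ = 0)
    (S : Finset ℝ) (hScard : S.card ≤ J) (hS : g₀ (↑S : Set ℝ)ᶜ = 0)
    (m : ℕ → Measure ℝ → ℝ)
    (hm : ∀ k ν, m k ν = ∫ θ, (θ - θ₀) ^ k ∂ν)
    (Δ : ℝ) (hne : (Finset.Icc 1 (2 * J)).Nonempty)
    (hΔ : Δ = (Finset.Icc 1 (2 * J)).sup' hne (fun j => |m j g - m j g₀|))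
    (k : ℕ) (hk : 2 * J < k) :
    |m k g - m k g₀| ≤ ((k - 2 * J : ℕ) : ℝ) * (M + 1) ^ (2 * J * (k - 2 * J) + 1) * Δ := by
  classical
  have hΘM : ∀ θ ∈ Θ, |θ - θ₀| ≤ M := fun θ hθ => hM.1 ⟨θ, hθ, rfl⟩
  have hM0 : 0 ≤ M := (abs_nonneg _).trans (hΘM θ₀ hθ₀)
  obtain ⟨p, hpmonic, hpdeg, hpnonneg, hpS, hpl1⟩ :=
    exists_monic_nonneg_eval_eq_zero (S := (S.filter (· ∈ Θ)).image (· - θ₀))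
      (card_image_le.trans ((card_filter_le _ _).trans hScard)) hM0 (by
        simp only [mem_image, mem_filter]
        rintro _ ⟨θ, ⟨-, hθ⟩, rfl⟩
        exact hΘM θ hθ)
  have hgM : ∀ᵐ θ ∂g, |θ - θ₀| ≤ M := (ae_iff.2 hgΘ).mono hΘM
  have hg₀M : ∀ᵐ θ ∂g₀, |θ - θ₀| ≤ M := (ae_iff.2 hg₀Θ).mono hΘM
  have hp₀ : ∀ᵐ θ ∂g₀, p.eval (θ - θ₀) = 0 := by
    filter_upwards [ae_iff.2 hS, ae_iff.2 hg₀Θ] with θ hθS hθΘ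
    exact hpS _ (mem_image_of_mem _ (mem_filter.2 ⟨by simpa using hθS, hθΘ⟩))
  have hrec := abs_sum_coeff_mul_moment_sub_le (f := (· - θ₀)) (by fun_prop) hgM hg₀M hpnonneg hp₀
  simp only [hpdeg, ← hm] at hrec
  have hmΔ : ∀ j ≤ 2 * J, |m j g - m j g₀| ≤ Δ := by
    intro j hj
    rcases Nat.eq_zero_or_pos j with rfl | hj0
    · obtain ⟨i, hi⟩ := hne
      have hm0 : m 0 g - m 0 g₀ = 0 := by simp [hm]
      rw [hm0, abs_zero, hΔ]
      exact (abs_nonneg _).trans (le_sup' (fun j => |m j g - m j g₀|) hi)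
    · exact hΔ ▸ le_sup' (fun j => |m j g - m j g₀|) (mem_Icc.2 ⟨hj0, hj⟩)
  have hcoeff : p.coeff (2 * J) = 1 := hpdeg ▸ hpmonic.coeff_natDegree
  exact abs_le_of_monic_recurrence (by omega) hcoeff hM0 hpl1 hmΔ hrec
    (by omega) k (by omega)
end

section
/- Let f₀ be a probability density with respect to μ and let s ∈ L²(f₀dμ) with ∫ s f₀ dμ = 0 and ∫ s² f₀ dμ = 1. Then ∫ (max(-s,0))² f₀ dμ = 0 is impossible; more precisely, if a sequence s_n of such normalized centered scores satisfies ∫ (max(-s_n,0))² f₀ dμ → 0 and the s_n admit a common square-integrable envelope S, then one reaches a contradiction with ∫ s_n² f₀ dμ = 1. Equivalently: for a class S of functions, each with mean zero and variance one under f₀dμ and dominated by a fixed S ∈ L²(f₀dμ), inf_{s∈S} ∫ (max(-s,0))² f₀ dμ > 0. -/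
set_option maxHeartbeats 1000000


open MeasureTheory Filter

theorem negative_part_variance_lower_bound
    {Ω : Type*} [MeasurableSpace Ω] (μ : Measure Ω)
    (f₀ : Ω → ℝ) (hf₀ : Measurable f₀) (hf₀nn : ∀ x, 0 ≤ f₀ x)
    (hf₀int : ∫ x, f₀ x ∂μ = 1)
    (𝒮 : Set (Ω → ℝ)) (S : Ω → ℝ) (hSmeas : Measurable S)
    (hSenv : Integrable (fun x => S x ^ 2 * f₀ x) μ)
    (hmeas : ∀ s ∈ 𝒮, Measurable s)
    (hcentered : ∀ s ∈ 𝒮, ∫ x, s x * f₀ x ∂μ = 0)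
    (hvar : ∀ s ∈ 𝒮, ∫ x, s x ^ 2 * f₀ x ∂μ = 1)
    (hdom : ∀ s ∈ 𝒮, ∀ x, |s x| ≤ S x) :
    ∃ ε > 0, ∀ s ∈ 𝒮, ε ≤ ∫ x, (max (-s x) 0) ^ 2 * f₀ x ∂μ := by
  have hf₀int' : Integrable f₀ μ := by
    by_contra h
    rw [integral_undef h] at hf₀int
    norm_num at hf₀int
  -- truncation functions
  set F : ℕ → Ω → ℝ := fun n x => if S x ≤ n then S x ^ 2 * f₀ x else 0 with hFdef
  have hFmeas : ∀ n, Measurable (F n) := fun n =>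
    Measurable.ite (measurableSet_le hSmeas measurable_const)
      ((hSmeas.pow_const 2).mul hf₀) measurable_const
  have hSf₀nn : ∀ x, 0 ≤ S x ^ 2 * f₀ x := fun x => mul_nonneg (sq_nonneg _) (hf₀nn x)
  have hFbound : ∀ n x, ‖F n x‖ ≤ S x ^ 2 * f₀ x := by
    intro n x
    rw [Real.norm_eq_abs]
    by_cases h : S x ≤ n
    · simp [hFdef, h, abs_of_nonneg (hSf₀nn x)]
    · simp [hFdef, h, hSf₀nn x]
  have hFint : ∀ n, Integrable (F n) μ := fun n =>
    hSenv.mono (hFmeas n).aestronglyMeasurable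
      (ae_of_all _ fun x => (hFbound n x).trans (le_abs_self _))
  have hFlim : ∀ x, Tendsto (fun n => F n x) atTop (nhds (S x ^ 2 * f₀ x)) := by
    intro x
    apply tendsto_const_nhds.congr'
    filter_upwards [eventually_ge_atTop ⌈S x⌉₊] with n hn
    have : S x ≤ n := (Nat.le_ceil (S x)).trans (Nat.cast_le.mpr hn)
    simp [hFdef, this]
  have hconv : Tendsto (fun n => ∫ x, F n x ∂μ) atTop (nhds (∫ x, S x ^ 2 * f₀ x ∂μ)) :=
    tendsto_integral_of_dominated_convergence _ (fun n => (hFmeas n).aestronglyMeasurable)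
      hSenv (fun n => ae_of_all _ (hFbound n)) (ae_of_all _ hFlim)
  obtain ⟨N, hN⟩ := (Metric.tendsto_atTop.mp hconv (1/4) (by norm_num))
  have hdist := hN N le_rfl
  rw [Real.dist_eq] at hdist
  -- tail function
  set T : Ω → ℝ := fun x => S x ^ 2 * f₀ x - F N x with hTdef
  have hTint : Integrable T μ := hSenv.sub (hFint N)
  have hTnn : ∀ x, 0 ≤ T x := by
    intro x
    by_cases h : S x ≤ N <;> simp [hTdef, hFdef, h, hSf₀nn x]
  have hTle : ∫ x, T x ∂μ ≤ 1/4 := by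
    rw [hTdef]
    rw [integral_sub hSenv (hFint N)]
    have := abs_lt.mp hdist
    linarith [this.1, this.2]
  set c : ℝ := (N : ℝ) + 1 with hcdef
  have hc : (1:ℝ) ≤ c := by
    have : (0:ℝ) ≤ (N:ℝ) := Nat.cast_nonneg N
    rw [hcdef]; linarith
  have hc0 : (0:ℝ) < c := by linarith
  refine ⟨1/(16*c^2), by positivity, ?_⟩
  intro s hs
  by_contra hcon
  push_neg at hcon
  set sp : Ω → ℝ := fun x => max (s x) 0 with hspdef
  set sm : Ω → ℝ := fun x => max (-s x) 0 with hsmdef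
  have hsm : Measurable s := hmeas s hs
  have hspm : Measurable sp := hsm.max measurable_const
  have hsmm : Measurable sm := hsm.neg.max measurable_const
  have hspnn : ∀ x, 0 ≤ sp x := fun x => le_max_right _ _
  have hsmnn : ∀ x, 0 ≤ sm x := fun x => le_max_right _ _
  have hspS : ∀ x, sp x ≤ S x := fun x =>
    max_le ((le_abs_self _).trans (hdom s hs x)) ((abs_nonneg _).trans (hdom s hs x))
  have hsmS : ∀ x, sm x ≤ S x := fun x =>
    max_le ((neg_le_abs _).trans (hdom s hs x)) ((abs_nonneg _).trans (hdom s hs x))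
  -- integrability helpers
  have hI2 : ∀ g : Ω → ℝ, Measurable g → (∀ x, |g x| ≤ S x) →
      Integrable (fun x => g x ^ 2 * f₀ x) μ := by
    intro g hg hgS
    refine hSenv.mono ((hg.pow_const 2).mul hf₀).aestronglyMeasurable (ae_of_all _ fun x => ?_)
    rw [Real.norm_eq_abs, Real.norm_eq_abs, abs_of_nonneg (mul_nonneg (sq_nonneg _) (hf₀nn x)),
      abs_of_nonneg (hSf₀nn x)]
    have h1 := hgS x
    have h5 : g x ^ 2 ≤ S x ^ 2 := by
      rw [← sq_abs]
      exact pow_le_pow_left₀ (abs_nonneg _) h1 2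
    exact mul_le_mul_of_nonneg_right h5 (hf₀nn x)
  have hI1 : ∀ g : Ω → ℝ, Measurable g → (∀ x, |g x| ≤ S x) →
      Integrable (fun x => g x * f₀ x) μ := by
    intro g hg hgS
    refine (hSenv.add hf₀int').mono (hg.mul hf₀).aestronglyMeasurable (ae_of_all _ fun x => ?_)
    rw [Real.norm_eq_abs, Real.norm_eq_abs, abs_mul, abs_of_nonneg (hf₀nn x)]
    have h1 := hgS x
    have h2 := abs_nonneg (g x)
    have h3 : S x ≤ S x ^ 2 + 1 := by nlinarith
    have h4 : |g x| * f₀ x ≤ (S x ^ 2 + 1) * f₀ x :=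
      mul_le_mul_of_nonneg_right (h1.trans h3) (hf₀nn x)
    calc |g x| * f₀ x ≤ S x ^ 2 * f₀ x + f₀ x := by linarith [h4]; 
      _ ≤ |S x ^ 2 * f₀ x + f₀ x| := le_abs_self _
  have habs_sp : ∀ x, |sp x| ≤ S x := fun x => by rw [abs_of_nonneg (hspnn x)]; exact hspS x
  have habs_sm : ∀ x, |sm x| ≤ S x := fun x => by rw [abs_of_nonneg (hsmnn x)]; exact hsmS x
  have hsp2 := hI2 sp hspm habs_sp
  have hsm2 := hI2 sm hsmm habs_sm
  have hsp1 := hI1 sp hspm habs_sp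
  have hsm1 := hI1 sm hsmm habs_sm
  -- (A) 1 = A + I
  set A := ∫ x, sp x ^ 2 * f₀ x ∂μ with hAdef
  set I := ∫ x, sm x ^ 2 * f₀ x ∂μ with hIdef
  set B := ∫ x, sm x * f₀ x ∂μ with hBdef
  have hA : (1:ℝ) = A + I := by
    have h1 : ∫ x, s x ^ 2 * f₀ x ∂μ = ∫ x, (sp x ^ 2 * f₀ x + sm x ^ 2 * f₀ x) ∂μ := by
      apply integral_congr_ae
      filter_upwards with x
      rcases le_total (s x) 0 with h | h
      · rw [hspdef, hsmdef]; simp only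
        rw [max_eq_right h, max_eq_left (neg_nonneg.2 h)]; ring
      · rw [hspdef, hsmdef]; simp only
        rw [max_eq_left h, max_eq_right (neg_nonpos.2 h)]; ring
    rw [← hvar s hs, h1, integral_add hsp2 hsm2]
  -- (B) ∫ sp f₀ = B
  have hB : ∫ x, sp x * f₀ x ∂μ = B := by
    have h1 : ∫ x, s x * f₀ x ∂μ = ∫ x, (sp x * f₀ x - sm x * f₀ x) ∂μ := by
      apply integral_congr_ae
      filter_upwards with x
      rcases le_total (s x) 0 with h | h
      · rw [hspdef, hsmdef]; simp only
        rw [max_eq_right h, max_eq_left (neg_nonneg.2 h)]; ring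
      · rw [hspdef, hsmdef]; simp only
        rw [max_eq_left h, max_eq_right (neg_nonpos.2 h)]; ring
    have h2 := hcentered s hs
    rw [h1, integral_sub hsp1 hsm1] at h2
    linarith
  have hBnn : 0 ≤ B := integral_nonneg fun x => mul_nonneg (hsmnn x) (hf₀nn x)
  have hInn : 0 ≤ I := integral_nonneg fun x => mul_nonneg (sq_nonneg _) (hf₀nn x)
  -- (C) 8c B ≤ 16 c² I + 1
  have hC : 8*c*B ≤ 16*c^2*I + 1 := by
    have hpt : ∀ x, 8*c*(sm x * f₀ x) ≤ 16*c^2*(sm x ^2 * f₀ x) + f₀ x := by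
      intro x
      nlinarith [mul_nonneg (hf₀nn x) (sq_nonneg (4*c*sm x - 1))]
    have hadd : Integrable (fun x => 16*c^2*(sm x ^2 * f₀ x) + f₀ x) μ :=
      (hsm2.const_mul (16*c^2)).add hf₀int'
    have hmono := integral_mono (hsm1.const_mul (8*c)) hadd hpt
    rw [integral_add (hsm2.const_mul (16*c^2)) hf₀int', integral_const_mul,
      integral_const_mul, hf₀int] at hmono
    linarith
  -- (D) A ≤ N B + 1/4
  have hD : A ≤ (N:ℝ)*B + 1/4 := by
    have hpt : ∀ x, sp x ^ 2 * f₀ x ≤ (N:ℝ)*(sp x * f₀ x) + T x := by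
      intro x
      by_cases h : S x ≤ N
      · have h1 : sp x ≤ (N:ℝ) := (hspS x).trans h
        have h2 : T x = S x ^ 2 * f₀ x - S x ^2 * f₀ x := by simp [hTdef, hFdef, h]
        have h3 : sp x ^ 2 * f₀ x ≤ (N:ℝ)*(sp x * f₀ x) := by
          nlinarith [mul_nonneg (mul_nonneg (sub_nonneg.2 h1) (hspnn x)) (hf₀nn x)]
        rw [h2]; linarith
      · have h2 : T x = S x ^ 2 * f₀ x := by simp [hTdef, hFdef, h]
        have h3 : sp x ^ 2 * f₀ x ≤ S x ^2 * f₀ x := by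
          have h5 : sp x ^ 2 ≤ S x ^ 2 := by nlinarith [hspS x, hspnn x]
          exact mul_le_mul_of_nonneg_right h5 (hf₀nn x)
        have h4 : 0 ≤ (N:ℝ)*(sp x * f₀ x) :=
          mul_nonneg (Nat.cast_nonneg N) (mul_nonneg (hspnn x) (hf₀nn x))
        rw [h2]; linarith
    have hadd : Integrable (fun x => (N:ℝ)*(sp x * f₀ x) + T x) μ :=
      (hsp1.const_mul (N:ℝ)).add hTint
    have hmono := integral_mono hsp2 hadd hpt
    rw [integral_add (hsp1.const_mul (N:ℝ)) hTint, integral_const_mul, hB] at hmono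
    linarith [hTle]
  -- final arithmetic
  have hI1' : 16*c^2*I < 1 := by
    have h1 : 16*c^2*I < 16*c^2*(1/(16*c^2)) :=
      mul_lt_mul_of_pos_left hcon (by positivity)
    have h2 : 16*c^2*(1/(16*c^2)) = 1 := by field_simp
    exact h2 ▸ h1
  have hNB : (N:ℝ)*B ≤ c*B := by
    have hNc : (N:ℝ) ≤ c := by rw [hcdef]; linarith
    exact mul_le_mul_of_nonneg_right hNc hBnn
  have hcB : c*B < 1/4 := by nlinarith [hC, hI1']
  have hI16 : 16*I ≤ 16*c^2*I := by
    nlinarith [mul_nonneg hInn (show (0:ℝ) ≤ c^2 - 1 by nlinarith)]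
  linarith [hA, hD, hNB, hcB, hI16, hI1', hInn]
end

section
/- (Banach's theorem for symmetric tensors) If T ∈ (ℝ^d)^{⊗k} is a symmetric tensor, then its spectral norm is achieved on the diagonal: sup_{c₁,…,c_k ∈ S^{d-1}} ⟨T, c₁⊗⋯⊗c_k⟩ = sup_{c ∈ S^{d-1}} |⟨T, c^{⊗k}⟩|. -/
noncomputable def tensorInner {d k : ℕ} (T : (Fin k → Fin d) → ℝ)
    (c : Fin k → Fin d → ℝ) : ℝ :=
  ∑ ι : Fin k → Fin d, T ι * ∏ j, c j (ι j)

namespace BST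
open Finset

variable {d k : ℕ}

/-! ### Basic expansion lemmas -/

lemma update_comp (c : Fin k → Fin d → ℝ) (p : Fin k) (x : Fin d → ℝ)
    (ι : Fin k → Fin d) (j : Fin k) :
    Function.update c p x j (ι j) = Function.update (fun j => c j (ι j)) p (x (ι p)) j := by
  rcases eq_or_ne j p with rfl | h
  · simp
  · simp [Function.update_of_ne h]

lemma prod_update_eq (c : Fin k → Fin d → ℝ) (p : Fin k) (x : Fin d → ℝ)
    (ι : Fin k → Fin d) (s : Finset (Fin k)) (hp : p ∈ s) :
    ∏ j ∈ s, Function.update c p x j (ι j) = x (ι p) * ∏ j ∈ s.erase p, c j (ι j) := by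
  rw [Finset.prod_congr rfl (fun j _ => update_comp c p x ι j),
    Finset.prod_update_of_mem hp, Finset.erase_eq]

lemma tI_update (T : (Fin k → Fin d) → ℝ) (c : Fin k → Fin d → ℝ) (p : Fin k)
    (x : Fin d → ℝ) :
    tensorInner T (Function.update c p x)
      = ∑ ι : Fin k → Fin d, T ι * (x (ι p) * ∏ j ∈ univ.erase p, c j (ι j)) := by
  unfold tensorInner
  exact Finset.sum_congr rfl fun ι _ => by
    rw [prod_update_eq c p x ι univ (mem_univ p)]

lemma tI_update_smul (T : (Fin k → Fin d) → ℝ) (c : Fin k → Fin d → ℝ) (p : Fin k)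
    (a : ℝ) (x : Fin d → ℝ) :
    tensorInner T (Function.update c p (a • x)) = a * tensorInner T (Function.update c p x) := by
  rw [tI_update, tI_update, Finset.mul_sum]
  exact Finset.sum_congr rfl fun ι _ => by simp [Pi.smul_apply, smul_eq_mul]; ring

lemma tI_perm (T : (Fin k → Fin d) → ℝ)
    (hsym : ∀ (ι : Fin k → Fin d) (π : Equiv.Perm (Fin k)), T (ι ∘ π) = T ι)
    (π : Equiv.Perm (Fin k)) (c : Fin k → Fin d → ℝ) :
    tensorInner T (fun j => c (π j)) = tensorInner T c := by
  unfold tensorInner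
  refine Fintype.sum_equiv (Equiv.arrowCongr π (Equiv.refl (Fin d)))
    _ _ (fun ι => ?_)
  have h1 : T ((Equiv.arrowCongr π (Equiv.refl (Fin d))) ι) = T ι := by
    have := hsym ι π.symm
    simpa [Equiv.arrowCongr, Function.comp_def] using this
  rw [h1]
  congr 1
  calc ∏ j, c (π j) (ι j) = ∏ j, c (π j) (ι (π.symm (π j))) := by simp
    _ = ∏ j, c j (ι (π.symm j)) := Equiv.prod_comp π (fun j => c j (ι (π.symm j)))
    _ = _ := by simp [Equiv.arrowCongr, Function.comp]

lemma tI_smul_diag (T : (Fin k → Fin d) → ℝ) (ε : Fin k → ℝ) (x : Fin d → ℝ) :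
    tensorInner T (fun i => ε i • x) = (∏ i, ε i) * tensorInner T (fun _ => x) := by
  unfold tensorInner
  rw [Finset.mul_sum]
  refine Finset.sum_congr rfl fun ι _ => ?_
  rw [show ∏ j, (ε j • x) (ι j) = (∏ j, ε j) * ∏ j, x (ι j) by
    rw [← Finset.prod_mul_distrib]; exact Finset.prod_congr rfl fun j _ => rfl]
  ring

/-! ### The pair form -/

noncomputable def pf (T : (Fin k → Fin d) → ℝ) (c : Fin k → Fin d → ℝ) (p q : Fin k)
    (x y : Fin d → ℝ) : ℝ :=
  tensorInner T (Function.update (Function.update c p x) q y)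

lemma pf_expand (T : (Fin k → Fin d) → ℝ) (c : Fin k → Fin d → ℝ) {p q : Fin k}
    (hpq : p ≠ q) (x y : Fin d → ℝ) :
    pf T c p q x y = ∑ ι : Fin k → Fin d,
      T ι * (y (ι q) * (x (ι p) * ∏ j ∈ (univ.erase q).erase p, c j (ι j))) := by
  unfold pf tensorInner
  refine Finset.sum_congr rfl fun ι _ => ?_
  rw [prod_update_eq _ q y ι univ (mem_univ q),
    prod_update_eq c p x ι (univ.erase q) (Finset.mem_erase.2 ⟨hpq, mem_univ p⟩)]

lemma pf_add_left (T : (Fin k → Fin d) → ℝ) (c : Fin k → Fin d → ℝ) {p q : Fin k}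
    (hpq : p ≠ q) (x x' y : Fin d → ℝ) :
    pf T c p q (x + x') y = pf T c p q x y + pf T c p q x' y := by
  rw [pf_expand T c hpq, pf_expand T c hpq, pf_expand T c hpq, ← Finset.sum_add_distrib]
  exact Finset.sum_congr rfl fun ι _ => by simp [Pi.add_apply]; ring

lemma pf_smul_left (T : (Fin k → Fin d) → ℝ) (c : Fin k → Fin d → ℝ) {p q : Fin k}
    (hpq : p ≠ q) (a : ℝ) (x y : Fin d → ℝ) :
    pf T c p q (a • x) y = a * pf T c p q x y := by
  rw [pf_expand T c hpq, pf_expand T c hpq, Finset.mul_sum]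
  exact Finset.sum_congr rfl fun ι _ => by simp [Pi.smul_apply, smul_eq_mul]; ring

lemma pf_smul_right (T : (Fin k → Fin d) → ℝ) (c : Fin k → Fin d → ℝ) {p q : Fin k}
    (hpq : p ≠ q) (a : ℝ) (x y : Fin d → ℝ) :
    pf T c p q x (a • y) = a * pf T c p q x y := by
  rw [pf_expand T c hpq, pf_expand T c hpq, Finset.mul_sum]
  exact Finset.sum_congr rfl fun ι _ => by simp [Pi.smul_apply, smul_eq_mul]; ring

lemma pf_add_right (T : (Fin k → Fin d) → ℝ) (c : Fin k → Fin d → ℝ) {p q : Fin k}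
    (hpq : p ≠ q) (x y y' : Fin d → ℝ) :
    pf T c p q x (y + y') = pf T c p q x y + pf T c p q x y' := by
  rw [pf_expand T c hpq, pf_expand T c hpq, pf_expand T c hpq, ← Finset.sum_add_distrib]
  exact Finset.sum_congr rfl fun ι _ => by simp [Pi.add_apply]; ring

lemma pf_self (T : (Fin k → Fin d) → ℝ) (c : Fin k → Fin d → ℝ) (p q : Fin k) :
    pf T c p q (c p) (c q) = tensorInner T c := by
  unfold pf
  rw [Function.update_eq_self, Function.update_eq_self]

lemma swap_update (c : Fin k → Fin d → ℝ) {p q : Fin k} (hpq : p ≠ q) (x y : Fin d → ℝ) :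
    (fun j => Function.update (Function.update c p x) q y (Equiv.swap p q j))
      = Function.update (Function.update c p y) q x := by
  funext j
  rcases eq_or_ne j p with rfl | hjp
  · rw [Equiv.swap_apply_left, Function.update_self, Function.update_of_ne hpq,
      Function.update_self]
  · rcases eq_or_ne j q with rfl | hjq
    · rw [Equiv.swap_apply_right, Function.update_of_ne hpq, Function.update_self,
        Function.update_self]
    · rw [Equiv.swap_apply_of_ne_of_ne hjp hjq, Function.update_of_ne hjq,
        Function.update_of_ne hjp, Function.update_of_ne hjq, Function.update_of_ne hjp]

lemma pf_symm (T : (Fin k → Fin d) → ℝ)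
    (hsym : ∀ (ι : Fin k → Fin d) (π : Equiv.Perm (Fin k)), T (ι ∘ π) = T ι)
    (c : Fin k → Fin d → ℝ) {p q : Fin k} (hpq : p ≠ q) (x y : Fin d → ℝ) :
    pf T c p q x y = pf T c p q y x := by
  unfold pf
  rw [← swap_update c hpq x y, tI_perm T hsym (Equiv.swap p q)]

/-! ### Sums of squares and the constraint set -/

lemma sum_sq_expand (x y : Fin d → ℝ) :
    ∑ l, (x l + y l)^2 = (∑ l, x l^2) + 2*(∑ l, x l * y l) + ∑ l, y l^2 := by
  rw [Finset.mul_sum, ← Finset.sum_add_distrib, ← Finset.sum_add_distrib]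
  exact Finset.sum_congr rfl fun l _ => by ring

def SS (d k : ℕ) : Set (Fin k → Fin d → ℝ) := {c | ∀ j, ∑ i, c j i ^ 2 = 1}

lemma update_mem {c : Fin k → Fin d → ℝ} (hc : c ∈ SS d k) (p : Fin k) {x : Fin d → ℝ}
    (hx : ∑ i, x i ^ 2 = 1) : Function.update c p x ∈ SS d k := by
  intro j
  rcases eq_or_ne j p with rfl | h
  · simpa using hx
  · simpa [Function.update_of_ne h] using hc j

noncomputable def Phi (c : Fin k → Fin d → ℝ) : ℝ := ∑ l : Fin d, (∑ i : Fin k, c i l) ^ 2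

lemma sum_update2 {c : Fin k → Fin d → ℝ} {p q : Fin k} (hpq : p ≠ q) (x : Fin d → ℝ)
    (l : Fin d) :
    ∑ i, Function.update (Function.update c p x) q x i l
      = 2 * x l + ∑ i ∈ (univ.erase q).erase p, c i l := by
  have h1 : ∀ i, Function.update (Function.update c p x) q x i l
      = Function.update (Function.update (fun i => c i l) p (x l)) q (x l) i := by
    intro i
    rcases eq_or_ne i q with rfl | hiq
    · simp
    · rcases eq_or_ne i p with rfl | hip
      · simp [Function.update_of_ne hiq, Function.update_of_ne hpq]
      · simp [Function.update_of_ne hiq, Function.update_of_ne hip]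
  rw [Finset.sum_congr rfl fun i _ => h1 i, Finset.sum_update_of_mem (mem_univ q),
    ← Finset.erase_eq,
    Finset.sum_update_of_mem (Finset.mem_erase.2 ⟨hpq, mem_univ p⟩), ← Finset.erase_eq]
  ring

lemma sum_split {c : Fin k → Fin d → ℝ} {p q : Fin k} (hpq : p ≠ q) (l : Fin d) :
    ∑ i, c i l = c p l + c q l + ∑ i ∈ (univ.erase q).erase p, c i l := by
  rw [← Finset.add_sum_erase univ (fun i => c i l) (mem_univ q),
    ← Finset.add_sum_erase (univ.erase q) (fun i => c i l)
      (Finset.mem_erase.2 ⟨hpq, mem_univ p⟩)]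
  ring

set_option maxHeartbeats 1000000 in
lemma pair_eq (T : (Fin k → Fin d) → ℝ)
    (hsym : ∀ (ι : Fin k → Fin d) (π : Equiv.Perm (Fin k)), T (ι ∘ π) = T ι)
    {c : Fin k → Fin d → ℝ} (hc : c ∈ SS d k)
    (hmax : ∀ c' ∈ SS d k, tensorInner T c' ≤ tensorInner T c)
    (hPhi : ∀ c' ∈ SS d k, tensorInner T c' = tensorInner T c → Phi c' ≤ Phi c)
    (p q : Fin k) : c p = c q ∨ c p = -(c q) := by
  rcases eq_or_ne p q with rfl | hpq
  · exact Or.inl rfl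
  set ρ : ℝ := ∑ l, c p l * c q l with hρdef
  have hp1 : ∑ l, c p l ^ 2 = 1 := hc p
  have hq1 : ∑ l, c q l ^ 2 = 1 := hc q
  have hsum : ∑ l, (c p l + c q l) ^ 2 = 2 + 2 * ρ := by
    rw [sum_sq_expand (c p) (c q), hp1, hq1]; ring
  have hdiff : ∑ l, (c p l + -(c q l)) ^ 2 = 2 - 2 * ρ := by
    rw [sum_sq_expand (c p) (fun l => -(c q l))]
    have h1 : ∑ l, (-(c q l)) ^ 2 = 1 := by simpa using hq1
    have h2 : ∑ l, c p l * -(c q l) = -ρ := by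
      rw [hρdef, ← Finset.sum_neg_distrib]
      exact Finset.sum_congr rfl fun l _ => by ring
    rw [hp1, h1, h2]; ring
  have hsum_nonneg : (0:ℝ) ≤ 2 + 2 * ρ := by
    rw [← hsum]; exact Finset.sum_nonneg fun l _ => sq_nonneg _
  have hdiff_nonneg : (0:ℝ) ≤ 2 - 2 * ρ := by
    rw [← hdiff]; exact Finset.sum_nonneg fun l _ => sq_nonneg _
  rcases eq_or_lt_of_le hdiff_nonneg with h1 | hρlt
  · left
    have hz := (Finset.sum_eq_zero_iff_of_nonneg (fun l _ => sq_nonneg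
      (c p l + -(c q l)))).1 (by rw [hdiff, ← h1])
    funext l
    have h2 := hz l (mem_univ l)
    have h3 := pow_eq_zero_iff (n := 2) (by norm_num) |>.1 h2
    linarith only [h3]
  rcases eq_or_lt_of_le hsum_nonneg with h1 | hρgt
  · right
    have hz := (Finset.sum_eq_zero_iff_of_nonneg (fun l _ => sq_nonneg
      (c p l + c q l))).1 (by rw [hsum, ← h1])
    funext l
    have h2 := hz l (mem_univ l)
    have h3 := pow_eq_zero_iff (n := 2) (by norm_num) |>.1 h2
    simp only [Pi.neg_apply]
    linarith only [h3]
  exfalso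
  set M : ℝ := tensorInner T c with hMdef
  set a2 : ℝ := 2 + 2 * ρ with ha2def
  have ha2pos : 0 < a2 := hρgt
  set b2 : ℝ := 2 - 2 * ρ with hb2def
  have hb2pos : 0 < b2 := hρlt
  have hab4 : a2 + b2 = 4 := by rw [ha2def, hb2def]; ring
  set a : ℝ := Real.sqrt a2 with hadef
  have hapos : 0 < a := Real.sqrt_pos.2 ha2pos
  have ha2 : a ^ 2 = a2 := Real.sq_sqrt ha2pos.le
  have halt2 : a < 2 := by
    linarith only [ha2, hapos, hb2pos, hab4, sq_nonneg (a - 2)]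
  set b : ℝ := Real.sqrt b2 with hbdef
  have hbpos : 0 < b := Real.sqrt_pos.2 hb2pos
  have hb2sq : b ^ 2 = b2 := Real.sq_sqrt hb2pos.le
  set u : Fin d → ℝ := a⁻¹ • (c p + c q) with hudef
  have hul : ∀ l, u l = a⁻¹ * (c p l + c q l) := fun l => rfl
  have hu_unit : ∑ l, u l ^ 2 = 1 := by
    have h1 : ∀ l, u l ^ 2 = a2⁻¹ * (c p l + c q l) ^ 2 := by
      intro l
      rw [hul l, mul_pow, ← ha2, inv_pow]
    rw [Finset.sum_congr rfl fun l _ => h1 l, ← Finset.mul_sum, hsum,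
      inv_mul_cancel₀ ha2pos.ne']
  have hsul : ∀ l, c p l + c q l = a * u l := by
    intro l
    rw [hul l, ← mul_assoc, mul_inv_cancel₀ hapos.ne', one_mul]
  have hsu : c p + c q = a • u := by
    funext l; exact hsul l
  set v : Fin d → ℝ := b⁻¹ • (c p + -(c q)) with hvdef
  have hvl : ∀ l, v l = b⁻¹ * (c p l + -(c q l)) := fun l => rfl
  have hv_unit : ∑ l, v l ^ 2 = 1 := by
    have h1 : ∀ l, v l ^ 2 = b2⁻¹ * (c p l + -(c q l)) ^ 2 := by
      intro l
      rw [hvl l, mul_pow, ← hb2sq, inv_pow]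
    rw [Finset.sum_congr rfl fun l _ => h1 l, ← Finset.mul_sum, hdiff,
      inv_mul_cancel₀ hb2pos.ne']
  have hsv : c p + -(c q) = b • v := by
    funext l
    rw [Pi.smul_apply, smul_eq_mul, hvl l, ← mul_assoc, mul_inv_cancel₀ hbpos.ne', one_mul]
    rfl
  have hfle : ∀ x y : Fin d → ℝ, (∑ i, x i ^ 2 = 1) → (∑ i, y i ^ 2 = 1) →
      pf T c p q x y ≤ M := fun x y hx hy =>
    hmax _ (update_mem (update_mem hc p hx) q hy)
  have hfpq : pf T c p q (c p) (c q) = M := pf_self T c p q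
  have hfqp : pf T c p q (c q) (c p) = M := by
    rw [pf_symm T hsym c hpq]; exact hfpq
  have hfss : pf T c p q (c p + c q) (c p + c q)
      = pf T c p q (c p) (c p) + pf T c p q (c q) (c q) + 2 * M := by
    rw [pf_add_left T c hpq, pf_add_right T c hpq, pf_add_right T c hpq, hfpq, hfqp]
    ring
  have hneg : ∀ x y : Fin d → ℝ, pf T c p q x (-(y)) = - pf T c p q x y := by
    intro x y
    have h1 : -(y) = (-1 : ℝ) • y := by funext l; simp
    rw [h1, pf_smul_right T c hpq]; ring
  have hnegl : ∀ x y : Fin d → ℝ, pf T c p q (-(x)) y = - pf T c p q x y := by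
    intro x y
    have h1 : -(x) = (-1 : ℝ) • x := by funext l; simp
    rw [h1, pf_smul_left T c hpq]; ring
  have hftt : pf T c p q (c p + -(c q)) (c p + -(c q))
      = pf T c p q (c p) (c p) + pf T c p q (c q) (c q) - 2 * M := by
    rw [pf_add_left T c hpq, pf_add_right T c hpq, pf_add_right T c hpq, hneg, hneg,
      hnegl, hnegl, hfpq, hfqp]
    ring
  have hfuu_le : pf T c p q u u ≤ M := hfle u u hu_unit hu_unit
  have hfvv_ge : - M ≤ pf T c p q v v := by
    have h1 := hfle (-(v)) v (by simpa using hv_unit) hv_unit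
    rw [hnegl] at h1
    linarith
  have hss_eq : pf T c p q (c p + c q) (c p + c q) = a2 * pf T c p q u u := by
    rw [hsu, pf_smul_left T c hpq, pf_smul_right T c hpq, ← ha2]
    ring
  have htt_eq : pf T c p q (c p + -(c q)) (c p + -(c q)) = b2 * pf T c p q v v := by
    rw [hsv, pf_smul_left T c hpq, pf_smul_right T c hpq, ← hb2sq]
    ring
  have key4M : a2 * pf T c p q u u - b2 * pf T c p q v v = 4 * M := by
    rw [← hss_eq, ← htt_eq, hfss, hftt]; ring
  have hfuu : pf T c p q u u = M := by
    have h2 : M ≤ pf T c p q u u := by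
      by_contra hcon
      push_neg at hcon
      have h3 := mul_lt_mul_of_pos_left hcon ha2pos
      have h4 : a2 * M + b2 * M = 4 * M := by rw [← add_mul, hab4]
      have h5 := mul_le_mul_of_nonneg_left hfvv_ge hb2pos.le
      have h6 : b2 * -M = -(b2 * M) := by ring
      rw [h6] at h5
      linarith only [key4M, h3, h4, h5]
    exact le_antisymm hfuu_le h2
  set r : Fin d → ℝ := fun l => ∑ i ∈ (univ.erase q).erase p, c i l with hrdef
  set t : ℝ := ∑ l, u l * r l with htdef
  set σ : ℝ := if 0 ≤ t then 1 else -1 with hσdef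
  have hσsq : σ ^ 2 = 1 := by
    rw [hσdef]; split <;> norm_num
  have hσul : ∀ l, (σ • u) l = σ * u l := fun l => rfl
  have hσu_unit : ∑ l, (σ • u) l ^ 2 = 1 := by
    have h1 : ∀ l, (σ • u) l ^ 2 = σ ^ 2 * u l ^ 2 := fun l => by
      rw [hσul l, mul_pow]
    rw [Finset.sum_congr rfl fun l _ => h1 l, ← Finset.mul_sum, hσsq, hu_unit, one_mul]
  set c' : Fin k → Fin d → ℝ :=
    Function.update (Function.update c p (σ • u)) q (σ • u) with hc'def
  have hc'S : c' ∈ SS d k := update_mem (update_mem hc p hσu_unit) q hσu_unit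
  have hFc' : tensorInner T c' = M := by
    have h1 : tensorInner T c' = pf T c p q (σ • u) (σ • u) := rfl
    rw [h1, pf_smul_left T c hpq, pf_smul_right T c hpq, hfuu]
    calc σ * (σ * M) = σ ^ 2 * M := by ring
      _ = M := by rw [hσsq, one_mul]
  have hPhi_old : Phi c = a2 + 2 * (a * t) + ∑ l, r l ^ 2 := by
    have h1 : ∀ l, (∑ i, c i l) = a * u l + r l := by
      intro l
      rw [sum_split hpq l, hsul l]
    have h2 : ∀ l, (a * u l + r l) ^ 2
        = a ^ 2 * u l ^ 2 + 2 * a * (u l * r l) + r l ^ 2 := fun l => by ring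
    calc Phi c = ∑ l, (a ^ 2 * u l ^ 2 + 2 * a * (u l * r l) + r l ^ 2) := by
          unfold Phi; exact Finset.sum_congr rfl fun l _ => by rw [h1 l, h2 l]
      _ = a ^ 2 * ∑ l, u l ^ 2 + 2 * a * ∑ l, u l * r l + ∑ l, r l ^ 2 := by
          rw [Finset.sum_add_distrib, Finset.sum_add_distrib, ← Finset.mul_sum,
            ← Finset.mul_sum]
      _ = a2 + 2 * (a * t) + ∑ l, r l ^ 2 := by
          rw [hu_unit, ha2, ← htdef]; ring
  have hPhi_new : Phi c' = 4 + 4 * (σ * t) + ∑ l, r l ^ 2 := by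
    have h1 : ∀ l, (∑ i, c' i l) = 2 * (σ * u l) + r l := by
      intro l
      rw [hc'def, sum_update2 hpq (σ • u) l, hσul l, hrdef]
    have h2 : ∀ l, (2 * (σ * u l) + r l) ^ 2
        = 4 * (σ ^ 2 * u l ^ 2) + 4 * (σ * (u l * r l)) + r l ^ 2 := fun l => by ring
    calc Phi c' = ∑ l, (4 * (σ ^ 2 * u l ^ 2) + 4 * (σ * (u l * r l)) + r l ^ 2) := by
          unfold Phi; exact Finset.sum_congr rfl fun l _ => by rw [h1 l, h2 l]
      _ = 4 * (σ ^ 2 * ∑ l, u l ^ 2) + 4 * (σ * ∑ l, u l * r l) + ∑ l, r l ^ 2 := by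
          rw [Finset.sum_add_distrib, Finset.sum_add_distrib, ← Finset.mul_sum,
            ← Finset.mul_sum, ← Finset.mul_sum, ← Finset.mul_sum]
      _ = 4 + 4 * (σ * t) + ∑ l, r l ^ 2 := by
          rw [hu_unit, hσsq, ← htdef]; ring
  have hlt : Phi c < Phi c' := by
    rw [hPhi_old, hPhi_new]
    rcases le_or_gt 0 t with ht | ht
    · have hσ1 : σ = 1 := by rw [hσdef, if_pos ht]
      rw [hσ1]
      linarith only [mul_nonneg (by linarith only [halt2] : (0:ℝ) ≤ 4 - 2 * a) ht,
        hab4, hb2pos]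
    · have hσ1 : σ = -1 := by rw [hσdef, if_neg (not_le.2 ht)]
      rw [hσ1]
      linarith only [mul_neg_of_pos_of_neg (by linarith only [hapos] : (0:ℝ) < 2 * a + 4) ht,
        hab4, hb2pos]
  exact absurd (hPhi c' hc'S hFc') (not_le.2 hlt)

lemma tI_continuous (T : (Fin k → Fin d) → ℝ) : Continuous (tensorInner T) := by
  unfold tensorInner
  refine continuous_finset_sum _ fun ι _ => Continuous.mul continuous_const ?_
  exact continuous_finset_prod _ fun j _ =>
    (continuous_apply (ι j)).comp (continuous_apply j)

lemma Phi_continuous : Continuous (Phi : (Fin k → Fin d → ℝ) → ℝ) := by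
  unfold Phi
  refine continuous_finset_sum _ fun l _ => ?_
  exact (continuous_finset_sum _ fun i _ =>
    (continuous_apply l).comp (continuous_apply i)).pow 2

lemma SS_compact (d k : ℕ) : IsCompact (SS d k) := by
  have hsub : SS d k ⊆ Set.pi Set.univ (fun _ : Fin k => Set.pi Set.univ
      (fun _ : Fin d => Set.Icc (-1:ℝ) 1)) := by
    intro c hc j _ i _
    have h1 : c j i ^ 2 ≤ 1 := by
      rw [← hc j]
      exact Finset.single_le_sum (f := fun i => c j i ^ 2)
        (fun i _ => sq_nonneg _) (Finset.mem_univ i)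
    have h2 : |c j i| ≤ 1 :=
      abs_le_of_sq_le_sq (by simpa using h1) zero_le_one
    exact abs_le.1 h2
  have hcomp : IsCompact (Set.pi Set.univ fun _ : Fin k => Set.pi Set.univ
      fun _ : Fin d => Set.Icc (-1:ℝ) 1) :=
    isCompact_univ_pi fun _ => isCompact_univ_pi fun _ => isCompact_Icc
  have hclosed : IsClosed (SS d k) := by
    have heq : SS d k = ⋂ j, (fun c : Fin k → Fin d → ℝ => ∑ i, c j i ^ 2) ⁻¹' {1} := by
      ext c
      simp [SS, Set.mem_iInter]
    rw [heq]
    refine isClosed_iInter fun j => IsClosed.preimage ?_ isClosed_singleton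
    exact continuous_finset_sum _ fun i _ =>
      ((continuous_apply i).comp (continuous_apply j)).pow 2
  exact hcomp.of_isClosed_subset hclosed hsub

end BST

theorem banach_symmetric_tensor {d k : ℕ} (hd : 0 < d) (hk : 0 < k)
    (T : (Fin k → Fin d) → ℝ)
    (hsym : ∀ (ι : Fin k → Fin d) (π : Equiv.Perm (Fin k)), T (ι ∘ π) = T ι) :
    (⨆ c : {c : Fin k → Fin d → ℝ // ∀ j, ∑ i, c j i ^ 2 = 1}, tensorInner T c.1) =
      ⨆ c : {c : Fin d → ℝ // ∑ i, c i ^ 2 = 1}, |tensorInner T (fun _ => c.1)| := by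
  classical
  open BST Finset in
  set e0 : Fin d → ℝ := fun i => if i = (⟨0, hd⟩ : Fin d) then 1 else 0 with he0
  have he0_unit : ∑ i, e0 i ^ 2 = 1 := by
    have h1 : ∀ i, e0 i ^ 2 = if i = (⟨0, hd⟩ : Fin d) then 1 else 0 := by
      intro i
      by_cases h : i = (⟨0, hd⟩ : Fin d) <;> simp [he0, h]
    rw [Finset.sum_congr rfl fun i _ => h1 i, Finset.sum_ite_eq' Finset.univ]
    simp
  have hSne : (BST.SS d k).Nonempty := ⟨fun _ => e0, fun j => he0_unit⟩
  obtain ⟨c₀, hc₀S, hc₀max⟩ := (BST.SS_compact d k).exists_isMaxOn hSne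
    (BST.tI_continuous T).continuousOn
  have hK1comp : IsCompact (BST.SS d k ∩ {c | tensorInner T c = tensorInner T c₀}) :=
    (BST.SS_compact d k).inter_right (isClosed_eq (BST.tI_continuous T) continuous_const)
  have hK1ne : (BST.SS d k ∩ {c | tensorInner T c = tensorInner T c₀}).Nonempty :=
    ⟨c₀, hc₀S, rfl⟩
  obtain ⟨cs, hcsK, hcsmax⟩ := hK1comp.exists_isMaxOn hK1ne
    BST.Phi_continuous.continuousOn
  obtain ⟨hcsS, hcsM⟩ := hcsK
  have hmax : ∀ c' ∈ BST.SS d k, tensorInner T c' ≤ tensorInner T cs := by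
    intro c' hc'
    rw [hcsM]
    exact hc₀max hc'
  have hPhimax : ∀ c' ∈ BST.SS d k, tensorInner T c' = tensorInner T cs →
      BST.Phi c' ≤ BST.Phi cs := by
    intro c' hc' hFeq
    exact hcsmax (Set.mem_inter hc' (by rw [Set.mem_setOf_eq, hFeq, hcsM]))
  have hpair := fun p q => BST.pair_eq T hsym hcsS hmax hPhimax p q
  have hbdd1 : BddAbove (Set.range fun c : {c : Fin k → Fin d → ℝ //
      ∀ j, ∑ i, c j i ^ 2 = 1} => tensorInner T c.1) := by
    refine ⟨tensorInner T cs, ?_⟩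
    rintro y ⟨c, rfl⟩
    exact hmax c.1 c.2
  have hne1 : Nonempty {c : Fin k → Fin d → ℝ // ∀ j, ∑ i, c j i ^ 2 = 1} :=
    ⟨⟨fun _ => e0, fun _ => he0_unit⟩⟩
  have hLHS : (⨆ c : {c : Fin k → Fin d → ℝ // ∀ j, ∑ i, c j i ^ 2 = 1},
      tensorInner T c.1) = tensorInner T cs := by
    apply le_antisymm
    · exact ciSup_le fun c => hmax c.1 c.2
    · exact le_ciSup hbdd1 ⟨cs, hcsS⟩
  have hdiag_le : ∀ x : Fin d → ℝ, (∑ i, x i ^ 2 = 1) →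
      |tensorInner T (fun _ => x)| ≤ tensorInner T cs := by
    intro x hx
    have hmem : (fun _ : Fin k => x) ∈ BST.SS d k := fun j => hx
    have h1 : tensorInner T (fun _ => x) ≤ tensorInner T cs := hmax _ hmem
    have hupd := Function.update_eq_self (⟨0, hk⟩ : Fin k) (fun _ : Fin k => x)
    have hnegx_unit : ∑ i, ((-1 : ℝ) • x) i ^ 2 = 1 := by
      have : ∀ i, ((-1 : ℝ) • x) i ^ 2 = x i ^ 2 := fun i => by
        simp [Pi.smul_apply]
      rw [Finset.sum_congr rfl fun i _ => this i]
      exact hx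
    have hmemneg : Function.update (fun _ : Fin k => x) (⟨0, hk⟩ : Fin k) ((-1 : ℝ) • x)
        ∈ BST.SS d k := BST.update_mem hmem _ hnegx_unit
    have hneg : tensorInner T (Function.update (fun _ : Fin k => x) (⟨0, hk⟩ : Fin k)
        ((-1 : ℝ) • x)) = - tensorInner T (fun _ => x) := by
      rw [BST.tI_update_smul, hupd]
      ring
    have h2 : - tensorInner T (fun _ => x) ≤ tensorInner T cs := by
      rw [← hneg]
      exact hmax _ hmemneg
    rw [abs_le]
    exact ⟨by linarith, h1⟩
  have hne2 : Nonempty {c : Fin d → ℝ // ∑ i, c i ^ 2 = 1} := ⟨⟨e0, he0_unit⟩⟩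
  have hbdd2 : BddAbove (Set.range fun c : {c : Fin d → ℝ // ∑ i, c i ^ 2 = 1} =>
      |tensorInner T fun _ => c.1|) := by
    refine ⟨tensorInner T cs, ?_⟩
    rintro y ⟨c, rfl⟩
    exact hdiag_le c.1 c.2
  set x : Fin d → ℝ := cs ⟨0, hk⟩ with hxdef
  have hxunit : ∑ i, x i ^ 2 = 1 := hcsS ⟨0, hk⟩
  have hcs_eq : ∀ i, cs i = x ∨ cs i = -x := fun i => hpair i ⟨0, hk⟩
  have hcs_fun : cs = fun i => (if cs i = x then (1:ℝ) else -1) • x := by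
    funext i
    rcases hcs_eq i with h | h
    · rw [if_pos h, one_smul, h]
    · by_cases hc2 : cs i = x
      · rw [if_pos hc2, one_smul, hc2]
      · rw [if_neg hc2, h]
        funext l
        simp
  have habs1 : |∏ i : Fin k, (if cs i = x then (1:ℝ) else -1)| = 1 := by
    rw [Finset.abs_prod, Finset.prod_congr rfl
      (fun i _ => show |if cs i = x then (1:ℝ) else -1| = 1 by split <;> simp)]
    simp
  have habs : |tensorInner T cs| = |tensorInner T (fun _ => x)| := by
    conv_lhs => rw [hcs_fun]
    rw [BST.tI_smul_diag, abs_mul, habs1, one_mul]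
  have hMle : tensorInner T cs ≤
      ⨆ c : {c : Fin d → ℝ // ∑ i, c i ^ 2 = 1}, |tensorInner T (fun _ => c.1)| := by
    calc tensorInner T cs ≤ |tensorInner T cs| := le_abs_self _
      _ = |tensorInner T (fun _ => x)| := habs
      _ ≤ _ := le_ciSup hbdd2 ⟨x, hxunit⟩
  rw [hLHS]
  exact le_antisymm hMle (ciSup_le fun c => hdiag_le c.1 c.2)
end

section
/- The probabilists' Hermite polynomials satisfy the pointwise bound |H_k(x)| ≤ √(k! · exp(x²/2)) for all real x and all nonnegative integers k. -/
noncomputable def hermiteEval (k : ℕ) (t : ℝ) : ℝ :=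
  Polynomial.aeval t (Polynomial.hermite k)

/-!
With `u = e^{-x²/4} He_n`, which solves the Weber equation `u'' + (ν - x²/4) u = 0` for
`ν = n + 1/2`, the claim reads `u² ≤ n!`. Let `c ≥ 0` be a maximum point of `u²`, `M = u(c)²` and
`q = ν - x²/4`.

If `q(c) > 3/4`, the function `Z = (q u² + u'²)/√q - 2 w u u' + w' (u² - M)` with
`w = x / (8 q^{3/2})` satisfies `Z' = w'' (u² - M) ≤ 0` on `[0, c]`, so
`√q(c) M ≤ Z(c) ≤ Z(0) ≤ E / √ν` with `E = ν u(0)² + u'(0)²`. One of `He_n(0)`, `He_n'(0)`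
vanishes and the other is a double factorial, and a Wallis-type estimate gives
`E² ≤ (3/4) ν (n!)²`, hence `M ≤ n!`.

Otherwise `c² ≥ 4n - 1` and, unless `u(c) = 0`, `u'(c) = 0`; the three-term recurrence then gives
`n (n - 1) u_{n-2}(c) = (c²/2 - n) u_n(c)` with `(c²/2 - n)² ≥ (n - 1/2)² ≥ n (n - 1)`, so the
bound for `n` follows from the bound for `n - 2`.
-/

open Polynomial Real Filter Topology Set
open scoped Nat

namespace Polynomial

theorem derivative_hermite_succ (n : ℕ) :
    derivative (hermite (n + 1)) = ((n : ℤ[X]) + 1) * hermite n := by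
  induction n with
  | zero => simp
  | succ n ih =>
    rw [hermite_succ (n + 1), derivative_sub, derivative_mul, derivative_X, one_mul, ih,
      derivative_mul, hermite_succ n]
    simp only [derivative_add, derivative_natCast, derivative_one, add_zero, zero_mul, zero_add]
    push_cast
    ring

theorem derivative_derivative_hermite (n : ℕ) :
    derivative (derivative (hermite n)) = X * derivative (hermite n) - (n : ℤ[X]) * hermite n := by
  cases n with
  | zero => simp
  | succ n =>
    rw [derivative_hermite_succ, derivative_mul, hermite_succ]
    simp only [derivative_add, derivative_natCast, derivative_one, add_zero, zero_mul, zero_add]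
    push_cast
    ring

theorem tendsto_eval_mul_exp_neg_mul_sq_cocompact (p : ℝ[X]) {a : ℝ} (ha : 0 < a) :
    Tendsto (fun x ↦ p.eval x * exp (-a * x ^ 2)) (cocompact ℝ) (𝓝 0) := by
  simp_rw [eval_eq_sum_range, Finset.sum_mul]
  rw [← Finset.sum_const_zero (s := Finset.range (p.natDegree + 1))]
  refine tendsto_finsetSum _ fun i _ ↦ squeeze_zero_norm (fun x ↦ le_of_eq ?_)
    (by simpa using (tendsto_rpow_abs_mul_exp_neg_mul_sq_cocompact ha i).const_mul ‖p.coeff i‖)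
  simp [mul_assoc]

end Polynomial

theorem Continuous.exists_forall_ge_of_tendsto_cocompact_zero {β : Type*} [TopologicalSpace β]
    [Nonempty β] {f : β → ℝ} (hf : Continuous f) (hnonneg : ∀ x, 0 ≤ f x)
    (hlim : Tendsto f (cocompact β) (𝓝 0)) : ∃ c, ∀ y, f y ≤ f c := by
  by_cases h : ∃ x₀, 0 < f x₀
  · obtain ⟨x₀, hx₀⟩ := h
    exact hf.exists_forall_ge' x₀ (hlim.eventually (ge_mem_nhds hx₀))
  · push Not at h
    exact ⟨Classical.arbitrary β, fun y ↦ (h y).trans (hnonneg _)⟩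

section WeberEquation

variable {ν : ℝ} {u u' : ℝ → ℝ}

noncomputable def weberEnergy (ν : ℝ) (u u' : ℝ → ℝ) (x : ℝ) : ℝ :=
  (ν - x ^ 2 / 4) * u x ^ 2 + u' x ^ 2

noncomputable def weberWeight (ν x : ℝ) : ℝ := x / (8 * √(ν - x ^ 2 / 4) ^ 3)

noncomputable def weberWeightDeriv (ν x : ℝ) : ℝ := (2 * ν + x ^ 2) / (16 * √(ν - x ^ 2 / 4) ^ 5)

noncomputable def weberWeightDeriv2 (ν x : ℝ) : ℝ :=
  3 * x * (6 * ν + x ^ 2) / (64 * √(ν - x ^ 2 / 4) ^ 7)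

noncomputable def weberLyapunov (ν : ℝ) (u u' : ℝ → ℝ) (M x : ℝ) : ℝ :=
  weberEnergy ν u u' x / √(ν - x ^ 2 / 4) - weberWeight ν x * (2 * u x * u' x)
    + weberWeightDeriv ν x * (u x ^ 2 - M)

lemma hasDerivAt_sqrt_sub_sq_div_four {x : ℝ} (hx : x ^ 2 / 4 < ν) :
    HasDerivAt (fun y ↦ √(ν - y ^ 2 / 4)) (-x / (4 * √(ν - x ^ 2 / 4))) x := by
  convert ((hasDerivAt_pow 2 x).div_const 4).const_sub ν |>.sqrt (by linarith) using 1
  ring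

lemma hasDerivAt_weberWeight {x : ℝ} (hx : x ^ 2 / 4 < ν) :
    HasDerivAt (weberWeight ν) (weberWeightDeriv ν x) x := by
  have hs : 0 < √(ν - x ^ 2 / 4) := sqrt_pos.2 (by linarith)
  have hν : ν = √(ν - x ^ 2 / 4) ^ 2 + x ^ 2 / 4 := by rw [sq_sqrt (by linarith)]; ring
  refine ((hasDerivAt_id' x).fun_div (((hasDerivAt_sqrt_sub_sq_div_four hx).fun_pow 3).const_mul 8)
    (by positivity)).congr_deriv ?_
  rw [weberWeightDeriv]
  generalize √(ν - x ^ 2 / 4) = s at *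
  subst hν
  field_simp
  ring

lemma hasDerivAt_weberWeightDeriv {x : ℝ} (hx : x ^ 2 / 4 < ν) :
    HasDerivAt (weberWeightDeriv ν) (weberWeightDeriv2 ν x) x := by
  have hs : 0 < √(ν - x ^ 2 / 4) := sqrt_pos.2 (by linarith)
  have hν : ν = √(ν - x ^ 2 / 4) ^ 2 + x ^ 2 / 4 := by rw [sq_sqrt (by linarith)]; ring
  refine (((hasDerivAt_pow 2 x).const_add (2 * ν)).fun_div
    (((hasDerivAt_sqrt_sub_sq_div_four hx).fun_pow 5).const_mul 16) (by positivity)).congr_deriv ?_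
  rw [weberWeightDeriv2]
  generalize √(ν - x ^ 2 / 4) = s at *
  subst hν
  field_simp
  ring

lemma hasDerivAt_weberEnergy {x : ℝ} (hu : HasDerivAt u (u' x) x)
    (hu' : HasDerivAt u' (-(ν - x ^ 2 / 4) * u x) x) :
    HasDerivAt (weberEnergy ν u u') (-x / 2 * u x ^ 2) x := by
  refine ((((hasDerivAt_pow 2 x).div_const 4).const_sub ν).fun_mul (hu.fun_pow 2)
    |>.fun_add (hu'.fun_pow 2)).congr_deriv ?_
  ring

lemma hasDerivAt_weberLyapunov (M : ℝ) {x : ℝ} (hx : x ^ 2 / 4 < ν) (hu : HasDerivAt u (u' x) x)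
    (hu' : HasDerivAt u' (-(ν - x ^ 2 / 4) * u x) x) :
    HasDerivAt (weberLyapunov ν u u' M) (weberWeightDeriv2 ν x * (u x ^ 2 - M)) x := by
  have hs : 0 < √(ν - x ^ 2 / 4) := sqrt_pos.2 (by linarith)
  have hν : ν = √(ν - x ^ 2 / 4) ^ 2 + x ^ 2 / 4 := by rw [sq_sqrt (by linarith)]; ring
  have hE := (hasDerivAt_weberEnergy hu hu').fun_div (hasDerivAt_sqrt_sub_sq_div_four hx) hs.ne'
  have hS := (hasDerivAt_weberWeight hx).fun_mul ((hu.const_mul 2).fun_mul hu')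
  have hP := (hasDerivAt_weberWeightDeriv hx).fun_mul ((hu.fun_pow 2).sub_const M)
  refine ((hE.fun_sub hS).fun_add hP).congr_deriv ?_
  rw [weberWeight, weberEnergy]
  generalize √(ν - x ^ 2 / 4) = s at *
  subst hν
  field_simp
  ring

lemma weberWeightDeriv2_nonneg {x : ℝ} (hx : 0 ≤ x) (hxν : x ^ 2 / 4 < ν) :
    0 ≤ weberWeightDeriv2 ν x := by
  have : 0 ≤ 6 * ν + x ^ 2 := by nlinarith
  unfold weberWeightDeriv2
  positivity

theorem sqrt_mul_sq_le_weberEnergy_zero (hu : ∀ x, HasDerivAt u (u' x) x)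
    (hu' : ∀ x, HasDerivAt u' (-(ν - x ^ 2 / 4) * u x) x) {c : ℝ} (hc : 0 ≤ c)
    (hcν : c ^ 2 / 4 < ν) (hcrit : u c * u' c = 0) (hmax : ∀ y ∈ Icc 0 c, u y ^ 2 ≤ u c ^ 2) :
    √(ν - c ^ 2 / 4) * u c ^ 2 ≤ weberEnergy ν u u' 0 / √ν := by
  set M := u c ^ 2
  have hq : ∀ y ∈ Icc 0 c, y ^ 2 / 4 < ν := fun y hy ↦
    lt_of_le_of_lt (by nlinarith [hy.1, hy.2]) hcν
  have hL (y) (hy : y ∈ Icc 0 c) := hasDerivAt_weberLyapunov M (hq y hy) (hu y) (hu' y)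
  have hanti : AntitoneOn (weberLyapunov ν u u' M) (Icc 0 c) := by
    refine antitoneOn_of_hasDerivWithinAt_nonpos (convex_Icc 0 c)
      (fun y hy ↦ (hL y hy).continuousAt.continuousWithinAt)
      (fun y hy ↦ (hL y (interior_subset hy)).hasDerivWithinAt) fun y hy ↦ ?_
    rw [interior_Icc] at hy
    have hy' := Ioo_subset_Icc_self hy
    exact mul_nonpos_of_nonneg_of_nonpos (weberWeightDeriv2_nonneg hy.1.le (hq y hy'))
      (sub_nonpos.2 (hmax y hy'))
  have hν : 0 < ν := by simpa using hq 0 (left_mem_Icc.2 hc)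
  have hL0 : weberLyapunov ν u u' M 0 ≤ weberEnergy ν u u' 0 / √ν := by
    have h0 : 0 ≤ weberWeightDeriv ν 0 := by unfold weberWeightDeriv; positivity
    have := mul_nonpos_of_nonneg_of_nonpos h0 (sub_nonpos.2 (hmax 0 (left_mem_Icc.2 hc)))
    simp only [weberLyapunov, weberWeight, zero_pow two_ne_zero, zero_div, zero_mul, sub_zero]
    linarith
  have hLc : weberLyapunov ν u u' M c = weberEnergy ν u u' c / √(ν - c ^ 2 / 4) := by
    simp [weberLyapunov, M, mul_assoc, hcrit]
  have hs : 0 < √(ν - c ^ 2 / 4) := sqrt_pos.2 (by linarith)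
  calc √(ν - c ^ 2 / 4) * M ≤ weberEnergy ν u u' c / √(ν - c ^ 2 / 4) := by
        rw [le_div_iff₀ hs, weberEnergy, mul_right_comm, ← sq, sq_sqrt (by linarith)]
        nlinarith [sq_nonneg (u' c)]
    _ = weberLyapunov ν u u' M c := hLc.symm
    _ ≤ weberLyapunov ν u u' M 0 := hanti (left_mem_Icc.2 hc) (right_mem_Icc.2 hc) hc
    _ ≤ weberEnergy ν u u' 0 / √ν := hL0

end WeberEquation

theorem hasDerivAt_hermiteEval (n : ℕ) (x : ℝ) :
    HasDerivAt (hermiteEval n) (aeval x (derivative (hermite n))) x :=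
  Polynomial.hasDerivAt_aeval _ x

theorem aeval_derivative_hermite_succ (n : ℕ) (x : ℝ) :
    aeval x (derivative (hermite (n + 1))) = (n + 1) * hermiteEval n x := by
  rw [derivative_hermite_succ, map_mul, map_add, map_natCast, map_one, hermiteEval]

theorem hermiteEval_succ_succ (n : ℕ) (x : ℝ) :
    hermiteEval (n + 2) x = x * hermiteEval (n + 1) x - (n + 1) * hermiteEval n x := by
  rw [hermiteEval, hermite_succ (n + 1), map_sub, map_mul, aeval_X,
    aeval_derivative_hermite_succ]
  rfl

theorem hermiteEval_neg (n : ℕ) (x : ℝ) : hermiteEval n (-x) = (-1) ^ n * hermiteEval n x := by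
  induction n using Nat.twoStepInduction with
  | zero => simp [hermiteEval]
  | one => simp [hermiteEval]
  | more n ih₀ ih₁ =>
    rw [hermiteEval_succ_succ, hermiteEval_succ_succ, ih₀, ih₁]
    ring

theorem hermiteEval_two_mul_add_one_zero (j : ℕ) : hermiteEval (2 * j + 1) 0 = 0 := by
  have h := hermiteEval_neg (2 * j + 1) 0
  rw [neg_zero, pow_succ, pow_mul, neg_one_sq, one_pow, one_mul, neg_one_mul] at h
  linarith

theorem hermiteEval_two_mul_zero_pow_four_le (j : ℕ) :
    (3 * j + 1) * hermiteEval (2 * j) 0 ^ 4 ≤ ((2 * j)! : ℝ) ^ 2 := by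
  induction j with
  | zero => simp [hermiteEval]
  | succ j ih =>
    have hrec : hermiteEval (2 * (j + 1)) 0 = -(2 * j + 1) * hermiteEval (2 * j) 0 := by
      rw [show 2 * (j + 1) = 2 * j + 2 by ring, hermiteEval_succ_succ]
      push_cast
      ring
    have hfac : ((2 * (j + 1))! : ℝ) = (2 * j + 2) * (2 * j + 1) * (2 * j)! := by
      rw [show 2 * (j + 1) = 2 * j + 1 + 1 by ring, Nat.factorial_succ, Nat.factorial_succ]
      push_cast
      ring
    have hcoeff : (3 * (j : ℝ) + 4) * (2 * j + 1) ^ 2 ≤ (3 * j + 1) * (2 * j + 2) ^ 2 := by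
      nlinarith
    rw [hrec, hfac]
    push_cast
    calc (3 * ((j : ℝ) + 1) + 1) * (-(2 * j + 1) * hermiteEval (2 * j) 0) ^ 4
        = (3 * j + 4) * (2 * j + 1) ^ 2 * ((2 * j + 1) ^ 2 * hermiteEval (2 * j) 0 ^ 4) := by ring
      _ ≤ (3 * j + 1) * (2 * j + 2) ^ 2 * ((2 * j + 1) ^ 2 * hermiteEval (2 * j) 0 ^ 4) := by
        gcongr
      _ = (2 * j + 2) ^ 2 * (2 * j + 1) ^ 2 * ((3 * j + 1) * hermiteEval (2 * j) 0 ^ 4) := by ring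
      _ ≤ ((2 * j + 2) * (2 * j + 1) * (2 * j)! ) ^ 2 := by
        rw [mul_pow _ ((2 * j)! : ℝ), mul_pow]
        gcongr

noncomputable def hermiteFun (n : ℕ) (x : ℝ) : ℝ := hermiteEval n x * exp (-(x ^ 2 / 4))

noncomputable def hermiteFunDeriv (n : ℕ) (x : ℝ) : ℝ :=
  (aeval x (derivative (hermite n)) - x / 2 * hermiteEval n x) * exp (-(x ^ 2 / 4))

theorem hasDerivAt_exp_neg_sq_div_four (x : ℝ) :
    HasDerivAt (fun y ↦ exp (-(y ^ 2 / 4))) (-(x / 2) * exp (-(x ^ 2 / 4))) x := by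
  refine ((hasDerivAt_pow 2 x).div_const 4).fun_neg.exp.congr_deriv ?_
  ring

theorem hasDerivAt_hermiteFun (n : ℕ) (x : ℝ) :
    HasDerivAt (hermiteFun n) (hermiteFunDeriv n x) x := by
  refine ((hasDerivAt_hermiteEval n x).fun_mul (hasDerivAt_exp_neg_sq_div_four x)).congr_deriv ?_
  rw [hermiteFunDeriv]
  ring

theorem hasDerivAt_hermiteFunDeriv (n : ℕ) (x : ℝ) :
    HasDerivAt (hermiteFunDeriv n) (-(n + 1 / 2 - x ^ 2 / 4) * hermiteFun n x) x := by
  have hD := Polynomial.hasDerivAt_aeval (derivative (hermite n)) x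
  rw [derivative_derivative_hermite, map_sub, map_mul, map_mul, aeval_X, map_natCast] at hD
  have hxH := ((hasDerivAt_id' x).div_const 2).fun_mul (hasDerivAt_hermiteEval n x)
  refine ((hD.fun_sub hxH).fun_mul (hasDerivAt_exp_neg_sq_div_four x)).congr_deriv ?_
  rw [hermiteFun, hermiteEval]
  ring

theorem hermiteFun_sq (n : ℕ) (x : ℝ) :
    hermiteFun n x ^ 2 = hermiteEval n x ^ 2 * exp (-(x ^ 2 / 2)) := by
  rw [hermiteFun, mul_pow, ← exp_nat_mul]
  ring_nf

theorem hermiteFun_neg_sq (n : ℕ) (x : ℝ) : hermiteFun n (-x) ^ 2 = hermiteFun n x ^ 2 := by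
  rw [hermiteFun_sq, hermiteFun_sq, hermiteEval_neg, mul_pow, ← pow_mul, pow_mul', neg_one_sq,
    one_pow, one_mul, neg_sq]

theorem tendsto_hermiteFun_cocompact (n : ℕ) :
    Tendsto (hermiteFun n) (cocompact ℝ) (𝓝 0) := by
  have h := (hermite n).map (algebraMap ℤ ℝ) |>.tendsto_eval_mul_exp_neg_mul_sq_cocompact
    (a := 1 / 4) (by norm_num)
  refine h.congr fun x ↦ ?_
  rw [hermiteFun, hermiteEval, aeval_def, eval₂_eq_eval_map]
  ring_nf

theorem exists_nonneg_forall_hermiteFun_sq_le (n : ℕ) :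
    ∃ c, 0 ≤ c ∧ ∀ y, hermiteFun n y ^ 2 ≤ hermiteFun n c ^ 2 := by
  have hcont : Continuous (hermiteFun n) :=
    continuous_iff_continuousAt.2 fun x ↦ (hasDerivAt_hermiteFun n x).continuousAt
  obtain ⟨c, hc⟩ := (hcont.fun_pow 2).exists_forall_ge_of_tendsto_cocompact_zero
    (fun x ↦ sq_nonneg _) (by simpa using (tendsto_hermiteFun_cocompact n).pow 2)
  refine ⟨|c|, abs_nonneg c, fun y ↦ ?_⟩
  rcases abs_choice c with h | h <;> rw [h]
  · exact hc y
  · rw [hermiteFun_neg_sq]; exact hc y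

theorem weberEnergy_hermiteFun_zero_sq_le (n : ℕ) :
    weberEnergy (n + 1 / 2) (hermiteFun n) (hermiteFunDeriv n) 0 ^ 2
      ≤ 3 / 4 * (n + 1 / 2) * (n ! : ℝ) ^ 2 := by
  simp only [weberEnergy, hermiteFun, hermiteFunDeriv, zero_pow two_ne_zero, zero_div, zero_mul,
    sub_zero, neg_zero, exp_zero, mul_one]
  rcases Nat.even_or_odd' n with ⟨j, rfl | rfl⟩
  · have hD : aeval (0 : ℝ) (derivative (hermite (2 * j))) = 0 := by
      cases j with
      | zero => simp
      | succ j =>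
        rw [show 2 * (j + 1) = 2 * j + 1 + 1 by ring, aeval_derivative_hermite_succ,
          hermiteEval_two_mul_add_one_zero, mul_zero]
    have h := hermiteEval_two_mul_zero_pow_four_le j
    rw [hD]
    push_cast
    calc ((2 * (j : ℝ) + 1 / 2) * hermiteEval (2 * j) 0 ^ 2 + 0 ^ 2) ^ 2
        = 3 / 4 * (2 * j + 1 / 2) * ((8 / 3 * j + 2 / 3) * hermiteEval (2 * j) 0 ^ 4) := by ring
      _ ≤ 3 / 4 * (2 * j + 1 / 2) * ((3 * j + 1) * hermiteEval (2 * j) 0 ^ 4) := by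
        gcongr <;> linarith
      _ ≤ 3 / 4 * (2 * j + 1 / 2) * ((2 * j)! : ℝ) ^ 2 := by gcongr
  · have h := hermiteEval_two_mul_zero_pow_four_le j
    rw [hermiteEval_two_mul_add_one_zero, aeval_derivative_hermite_succ, Nat.factorial_succ]
    push_cast
    calc ((2 * (j : ℝ) + 1 + 1 / 2) * 0 ^ 2 + ((2 * j + 1) * hermiteEval (2 * j) 0) ^ 2) ^ 2
        = (2 * j + 1) ^ 2 * ((2 * j + 1) ^ 2 * hermiteEval (2 * j) 0 ^ 4) := by ring
      _ ≤ (2 * j + 1) ^ 2 *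
          (3 / 4 * (2 * j + 1 + 1 / 2) * (3 * j + 1) * hermiteEval (2 * j) 0 ^ 4) := by
        gcongr
        nlinarith
      _ ≤ (2 * j + 1) ^ 2 * (3 / 4 * (2 * j + 1 + 1 / 2) * ((2 * j)! : ℝ) ^ 2) := by
        rw [mul_assoc _ (3 * (j : ℝ) + 1)]
        gcongr
      _ = _ := by ring

theorem hermiteFun_mul_hermiteFunDeriv_eq_zero_of_isMax {n : ℕ} {c : ℝ}
    (hmax : ∀ y, hermiteFun n y ^ 2 ≤ hermiteFun n c ^ 2) :
    hermiteFun n c * hermiteFunDeriv n c = 0 := by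
  have h := IsLocalMax.hasDerivAt_eq_zero (Eventually.of_forall hmax)
    ((hasDerivAt_hermiteFun n c).fun_pow 2)
  simpa using h

theorem hermiteFun_sq_le_factorial_of_isMax (n : ℕ) {c : ℝ} (hc : 0 ≤ c)
    (hcν : 3 / 4 < n + 1 / 2 - c ^ 2 / 4) (hmax : ∀ y, hermiteFun n y ^ 2 ≤ hermiteFun n c ^ 2) :
    hermiteFun n c ^ 2 ≤ n ! := by
  have h := sqrt_mul_sq_le_weberEnergy_zero (hasDerivAt_hermiteFun n) (hasDerivAt_hermiteFunDeriv n)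
    hc (by linarith) (hermiteFun_mul_hermiteFunDeriv_eq_zero_of_isMax hmax) fun y _ ↦ hmax y
  have hsq := pow_le_pow_left₀ (by positivity) h 2
  rw [mul_pow, div_pow, sq_sqrt (by linarith), sq_sqrt (by positivity), le_div_iff₀ (by positivity)]
    at hsq
  have hG := weberEnergy_hermiteFun_zero_sq_le n
  have hqM : (n + 1 / 2 - c ^ 2 / 4) * (hermiteFun n c ^ 2) ^ 2 ≤ 3 / 4 * (n ! : ℝ) ^ 2 :=
    le_of_mul_le_mul_right (by linarith) (by positivity : (0 : ℝ) < n + 1 / 2)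
  have hM : (hermiteFun n c ^ 2) ^ 2 ≤ (n ! : ℝ) ^ 2 := by
    nlinarith [mul_le_mul_of_nonneg_right hcν.le (sq_nonneg (hermiteFun n c ^ 2))]
  exact (pow_le_pow_iff_left₀ (by positivity) (by positivity) two_ne_zero).1 hM

theorem hermiteFun_sq_le_factorial_of_deriv_eq_zero (n : ℕ) (ih : ∀ x, hermiteFun n x ^ 2 ≤ n !)
    {c : ℝ} (hc : 4 * (n + 2) - 1 ≤ c ^ 2) (hcrit : hermiteFunDeriv (n + 2) c = 0) :
    hermiteFun (n + 2) c ^ 2 ≤ (n + 2)! := by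
  have hD : aeval c (derivative (hermite (n + 2))) = c / 2 * hermiteEval (n + 2) c := by
    rw [hermiteFunDeriv, mul_eq_zero, sub_eq_zero] at hcrit
    exact hcrit.resolve_right (exp_ne_zero _)
  rw [aeval_derivative_hermite_succ] at hD
  have hrec := hermiteEval_succ_succ n c
  push_cast at hD hrec
  have hu : ((n : ℝ) + 2) * (n + 1) * hermiteFun n c
      = (c ^ 2 / 2 - (n + 2)) * hermiteFun (n + 2) c := by
    simp only [hermiteFun]
    linear_combination exp (-(c ^ 2 / 4)) * ((n + 2) * hrec + c * hD)
  have hfac : ((n + 2)! : ℝ) = (n + 2) * (n + 1) * n ! := by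
    rw [Nat.factorial_succ, Nat.factorial_succ]; push_cast; ring
  have hgap : ((n : ℝ) + 3 / 2) ^ 2 ≤ (c ^ 2 / 2 - (n + 2)) ^ 2 := by
    gcongr; linarith
  have hkey : ((n : ℝ) + 3 / 2) ^ 2 * hermiteFun (n + 2) c ^ 2
      ≤ ((n : ℝ) + 3 / 2) ^ 2 * ((n + 2) * (n + 1) * n !) := by
    calc ((n : ℝ) + 3 / 2) ^ 2 * hermiteFun (n + 2) c ^ 2
        ≤ (c ^ 2 / 2 - (n + 2)) ^ 2 * hermiteFun (n + 2) c ^ 2 := by gcongr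
      _ = ((n + 2) * (n + 1)) ^ 2 * hermiteFun n c ^ 2 := by rw [← mul_pow, ← hu]; ring
      _ ≤ ((n + 2) * (n + 1)) ^ 2 * n ! := by gcongr; exact ih c
      _ ≤ ((n : ℝ) + 3 / 2) ^ 2 * ((n + 2) * (n + 1) * n !) := by
        rw [sq, mul_assoc]
        gcongr
        nlinarith
  rw [hfac]
  exact le_of_mul_le_mul_left hkey (by positivity)

theorem hermiteFun_sq_le_factorial (n : ℕ) (x : ℝ) : hermiteFun n x ^ 2 ≤ n ! := by
  induction n using Nat.twoStepInduction generalizing x with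
  | zero =>
    have h0 : hermiteEval 0 x = 1 := by simp [hermiteEval]
    rw [hermiteFun_sq, h0, one_pow, one_mul, Nat.factorial_zero, Nat.cast_one, exp_le_one_iff]
    linarith [sq_nonneg x]
  | one =>
    have h1 : hermiteEval 1 x = x := by simp [hermiteEval]
    have h := quadratic_le_exp_of_nonneg (by positivity : 0 ≤ x ^ 2 / 2)
    rw [hermiteFun_sq, h1, exp_neg, ← div_eq_mul_inv, div_le_iff₀ (exp_pos _), Nat.factorial_one,
      Nat.cast_one, one_mul]
    nlinarith [sq_nonneg (x ^ 2 / 2 - 1)]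
  | more n ih _ =>
    obtain ⟨c, hc, hmax⟩ := exists_nonneg_forall_hermiteFun_sq_le (n + 2)
    refine (hmax x).trans ?_
    rcases lt_or_ge (3 / 4) ((n + 2 : ℕ) + 1 / 2 - c ^ 2 / 4 : ℝ) with hcν | hcν
    · exact hermiteFun_sq_le_factorial_of_isMax (n + 2) hc hcν hmax
    · rcases mul_eq_zero.1 (hermiteFun_mul_hermiteFunDeriv_eq_zero_of_isMax hmax) with h | h
      · simp [h]
      · exact hermiteFun_sq_le_factorial_of_deriv_eq_zero n ih (by push_cast at hcν; linarith) h

theorem hermite_cramer_bound (k : ℕ) (x : ℝ) :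
    |hermiteEval k x| ≤ Real.sqrt ((k.factorial : ℝ) * Real.exp (x ^ 2 / 2)) := by
  refine abs_le_sqrt ?_
  have h := hermiteFun_sq_le_factorial k x
  rw [hermiteFun_sq, exp_neg, ← div_eq_mul_inv, div_le_iff₀ (exp_pos _)] at h
  exact h
end
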